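/- arXiv:2602.04403 — 13 statements merged into one kernel-verified Lean document; each statement's English description precedes it below -/
import Mathlib

section
/- Let G be a C4-free graph (no induced cycle of length 4), K a clique of G, and v, w two adjacent vertices of G with v, w not in K. Then the neighborhood of v in K is contained in the neighborhood of w in K, or the neighborhood of w in K is contained in the neighborhood of v in K. -/
open SimpleGraph

/-- `G` has no induced cycle on four vertices: every 4-cycle `a-b-c-d-a` with distinct
opposite vertices has a chord. -/
def C4Free {V : Type*} (G : SimpleGraph V) : Prop :=
  ∀ a b c d : V, a ≠ c → b ≠ d →
    G.Adj a b → G.Adj b c → G.Adj c d → G.Adj d a → G.Adj a c ∨ G.Adj b d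

theorem stmt_0 {V : Type*} [Fintype V] (G : SimpleGraph V) (hG : C4Free G)
    (K : Set V) (hK : G.IsClique K) (v w : V) (hvw : G.Adj v w)
    (hv : v ∉ K) (hw : w ∉ K) :
    K ∩ G.neighborSet v ⊆ K ∩ G.neighborSet w ∨
      K ∩ G.neighborSet w ⊆ K ∩ G.neighborSet v := by
  by_contra h
  push_neg at h
  rw [Set.not_subset, Set.not_subset] at h
  obtain ⟨⟨a, ⟨haK, hav⟩, ha⟩, ⟨b, ⟨hbK, hbw⟩, hb⟩⟩ := h
  simp only [Set.mem_inter_iff, mem_neighborSet] at ha hb hav hbw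
  have haw : ¬ G.Adj a w := fun h' => ha ⟨haK, h'.symm⟩
  have hbv : ¬ G.Adj b v := fun h' => hb ⟨hbK, h'.symm⟩
  have hab : a ≠ b := fun h' => hbv (h' ▸ hav.symm)
  have habAdj : G.Adj a b := hK haK hbK hab
  have h1 : v ≠ b := fun h' => hv (h' ▸ hbK)
  have h2 : a ≠ w := fun h' => hw (h' ▸ haK)
  rcases hG v a b w h1 h2 hav habAdj hbw.symm hvw.symm with h3 | h3
  · exact hbv h3.symm
  · exact haw h3
end

section
/- Every chordal graph that is not a complete graph contains two non-adjacent simplicial vertices. -/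
open SimpleGraph

/-- A graph is chordal if it has no induced cycle of length at least 4. -/
def Chordal {V : Type*} (G : SimpleGraph V) : Prop :=
  ∀ n : ℕ, 4 ≤ n → IsEmpty (cycleGraph n ↪g G)

/-- A vertex is simplicial if its (closed, equivalently open) neighborhood is a clique. -/
def IsSimplicial {V : Type*} (G : SimpleGraph V) (v : V) : Prop :=
  G.IsClique (G.neighborSet v)

/-!
Dirac's argument, relativised to a vertex set `W` and run by induction on `|W|`. If `W` is not a
clique, pick non-adjacent `a, b ∈ W`, let `B` be the component of `b` in `W` minus the closed
neighbourhood of `a`, and let `S` be the set of vertices of `W \ B` with a neighbour in `B`. Then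
`S ⊆ N(a)` separates `B` from the rest `A ∋ a` of `W`, and `S` is a clique: for non-adjacent
`x, y ∈ S`, a shortest `x`–`y` path through `B` together with `a` would be an induced cycle of
length at least 4. Induction on `A ∪ S` and on `B ∪ S` yields a simplicial vertex on each side
outside the clique `S`; it stays simplicial in `W` because its neighbours in `W` remain on its side.
-/

namespace SimpleGraph

variable {V : Type*} {G : SimpleGraph V}

lemma cycleGraph_adj_iff_val {n : ℕ} {i j : Fin (n + 2)} :
    (cycleGraph (n + 2)).Adj i j ↔ (i : ℕ) = j + 1 ∨ (j : ℕ) = i + 1 ∨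
      ((i : ℕ) = 0 ∧ (j : ℕ) = n + 1) ∨ ((j : ℕ) = 0 ∧ (i : ℕ) = n + 1) := by
  have := i.isLt
  have := j.isLt
  rw [cycleGraph_adj']
  rcases lt_trichotomy i j with h | rfl | h
  · rw [Fin.coe_sub_iff_lt.2 h, Fin.sub_val_of_le h.le]; omega
  · simp only [sub_self, Fin.val_zero]; omega
  · rw [Fin.coe_sub_iff_lt.2 h, Fin.sub_val_of_le h.le]; omega

namespace Walk

lemma not_adj_getVert_of_length_eq_dist {u v : V} {p : G.Walk u v} (hp : p.length = G.dist u v)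
    {i j : ℕ} (hij : i + 1 < j) (hj : j ≤ p.length) : ¬ G.Adj (p.getVert i) (p.getVert j) := by
  intro h
  have := G.dist_le ((p.take i).append (cons h (p.drop j)))
  simp only [length_append, take_length, length_cons, drop_length] at this
  omega

lemma adj_getVert_iff_of_chordless {u v : V} {p : G.Walk u v}
    (hchord : ∀ ⦃i j⦄, i + 1 < j → j ≤ p.length → ¬ G.Adj (p.getVert i) (p.getVert j))
    {i j : ℕ} (hi : i ≤ p.length) (hj : j ≤ p.length) :
    G.Adj (p.getVert i) (p.getVert j) ↔ i = j + 1 ∨ j = i + 1 := by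
  refine ⟨fun h => ?_, ?_⟩
  · rcases lt_trichotomy i j with hij | rfl | hij
    · by_contra hne
      exact hchord (by omega) hj h
    · exact absurd h (G.irrefl)
    · by_contra hne
      exact hchord (by omega) hi h.symm
  · rintro (rfl | rfl)
    · exact (p.adj_getVert_succ (by omega)).symm
    · exact p.adj_getVert_succ (by omega)

theorem IsPath.nonempty_cycleGraph_embedding {x y a : V} {q : G.Walk x y} (hq : q.IsPath)
    (hchord : ∀ ⦃i j⦄, i + 1 < j → j ≤ q.length → ¬ G.Adj (q.getVert i) (q.getVert j))
    (ha : a ∉ q.support) (hadj : ∀ i ≤ q.length, G.Adj (q.getVert i) a ↔ i = 0 ∨ i = q.length) :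
    Nonempty (cycleGraph (q.length + 2) ↪g G) := by
  let f : Fin (q.length + 2) → V := fun i => if (i : ℕ) ≤ q.length then q.getVert i else a
  have hqa : ∀ i, q.getVert i ≠ a := fun i h => ha (h ▸ q.getVert_mem_support i)
  refine ⟨⟨⟨f, fun i j hij => Fin.ext ?_⟩, fun {i j} => ?_⟩⟩
  · have := i.isLt
    have := j.isLt
    simp only [f] at hij
    split_ifs at hij with hi hj hj
    · exact hq.getVert_injOn hi hj hij
    · exact absurd hij (hqa _)
    · exact absurd hij.symm (hqa _)
    · omega
  · have := i.isLt
    have := j.isLt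
    change G.Adj (f i) (f j) ↔ _
    simp only [f, cycleGraph_adj_iff_val]
    split_ifs with hi hj hj
    · rw [q.adj_getVert_iff_of_chordless hchord hi hj]; omega
    · rw [hadj _ hi]; omega
    · rw [G.adj_comm, hadj _ hj]; omega
    · simp only [SimpleGraph.irrefl, false_iff]; omega

theorem exists_chordless_path_of_support_subset {s : Set V} {x y : V} (p : G.Walk x y)
    (hp : ∀ v ∈ p.support, v ∈ s) :
    ∃ q : G.Walk x y, q.IsPath ∧ (∀ v ∈ q.support, v ∈ s) ∧
      ∀ ⦃i j⦄, i + 1 < j → j ≤ q.length → ¬ G.Adj (q.getVert i) (q.getVert j) := by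
  obtain ⟨r, hr⟩ := Reachable.exists_walk_length_eq_dist ⟨p.induce s hp⟩
  let f := (Embedding.induce s (G := G)).toHom
  have hsupp : ∀ v ∈ (r.map f).support, v ∈ s := by
    simp only [support_map, List.mem_map]
    rintro _ ⟨v, -, rfl⟩
    exact v.2
  have hchord : ∀ ⦃i j⦄, i + 1 < j → j ≤ (r.map f).length →
      ¬ G.Adj ((r.map f).getVert i) ((r.map f).getVert j) := by
    simp only [length_map, getVert_map]
    exact fun i j hij hj => r.not_adj_getVert_of_length_eq_dist hr hij hj
  exact ⟨_, (r.isPath_of_length_eq_dist hr).map Subtype.val_injective, hsupp, hchord⟩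

end Walk

open Walk

theorem _root_.Chordal.adj_of_common_neighbor_of_walk {a x y : V} (hG : Chordal G)
    (hx : G.Adj x a) (hy : G.Adj y a) (hxy : x ≠ y) (p : G.Walk x y)
    (hp : ∀ v ∈ p.support, v = x ∨ v = y ∨ (v ≠ a ∧ ¬ G.Adj v a)) : G.Adj x y := by
  by_contra hnxy
  obtain ⟨q, hq, hqR, hchord⟩ := p.exists_chordless_path_of_support_subset hp
  have hlen : 1 < q.length := by
    by_contra! h
    rcases Nat.le_one_iff_eq_zero_or_eq_one.1 h with h | h
    · exact hxy (eq_of_length_eq_zero h)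
    · exact hnxy (adj_of_length_eq_one h)
  have hinterior : ∀ i, 0 < i → i < q.length → q.getVert i ≠ a ∧ ¬ G.Adj (q.getVert i) a := by
    intro i h0 hi
    rcases hqR _ (q.getVert_mem_support i) with h | h | h
    · exact absurd (hq.getVert_injOn (by simp; omega) (by simp) (h.trans q.getVert_zero.symm))
        (by omega)
    · exact absurd (hq.getVert_injOn (by simp; omega) (by simp) (h.trans q.getVert_length.symm))
        (by omega)
    · exact h
  refine (hG _ (by omega)).false (hq.nonempty_cycleGraph_embedding (a := a) hchord ?_ ?_).some
  · rw [mem_support_iff_exists_getVert]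
    rintro ⟨i, hia, hi⟩
    rcases Nat.eq_zero_or_pos i with rfl | h0
    · exact G.ne_of_adj hx (q.getVert_zero ▸ hia)
    rcases hi.lt_or_eq with hi | rfl
    · exact (hinterior i h0 hi).1 hia
    · exact G.ne_of_adj hy (q.getVert_length ▸ hia)
  · intro i hi
    rcases Nat.eq_zero_or_pos i with rfl | h0
    · simpa using hx
    rcases hi.lt_or_eq with hi | rfl
    · simp only [(hinterior i h0 hi).2, false_iff]; omega
    · simpa using hy

theorem _root_.Chordal.isClique_of_forall_adj_of_walk (hG : Chordal G) {a b : V} {S : Set V}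
    (hS : ∀ x ∈ S, G.Adj x a ∧
      ∃ w, G.Adj x w ∧ ∃ p : G.Walk b w, ∀ z ∈ p.support, z ≠ a ∧ ¬ G.Adj z a) :
    G.IsClique S := by
  intro x hx y hy hxy
  obtain ⟨hxa, x', hxx', px, hpx⟩ := hS x hx
  obtain ⟨hya, y', hyy', py, hpy⟩ := hS y hy
  refine hG.adj_of_common_neighbor_of_walk hxa hya hxy
    (cons hxx' ((px.reverse.append py).concat hyy'.symm)) fun z hz => ?_
  simp only [support_cons, support_concat, support_append, support_reverse, List.mem_cons,
    List.mem_append, List.mem_reverse, List.not_mem_nil, or_false] at hz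
  rcases hz with rfl | (hz | hz) | rfl
  · exact .inl rfl
  · exact .inr (.inr (hpx z hz))
  · exact .inr (.inr (hpy z (List.mem_of_mem_tail hz)))
  · exact .inr (.inl rfl)

def IsSimplicialIn (G : SimpleGraph V) (W : Set V) (v : V) : Prop :=
  G.IsClique (G.neighborSet v ∩ W)

theorem _root_.Chordal.exists_cliqueSeparator (hG : Chordal G) {W : Set V} {a b : V}
    (ha : a ∈ W) (hb : b ∈ W) (hab : a ≠ b) (hnab : ¬ G.Adj a b) :
    ∃ A B S : Set V, a ∈ A ∧ b ∈ B ∧ G.IsClique S ∧ A ∪ S ⊆ W \ B ∧ B ∪ S ⊆ W \ A ∧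
      (∀ v ∈ A, G.neighborSet v ∩ W ⊆ A ∪ S) ∧ (∀ v ∈ B, G.neighborSet v ∩ W ⊆ B ∪ S) := by
  set R : Set V := {z | z ∈ W ∧ z ≠ a ∧ ¬ G.Adj z a}
  set B : Set V := {v | ∃ p : G.Walk b v, ∀ z ∈ p.support, z ∈ R}
  set S : Set V := {x | x ∈ W ∧ x ∉ B ∧ ∃ w ∈ B, G.Adj x w}
  have hBR : B ⊆ R := fun v ⟨p, hp⟩ => hp v p.end_mem_support
  have hBclosed : ∀ v ∈ B, ∀ w ∈ R, G.Adj v w → w ∈ B := by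
    rintro v ⟨p, hp⟩ w hw hvw
    refine ⟨p.concat hvw, fun z hz => ?_⟩
    simp only [support_concat, List.mem_append, List.mem_singleton] at hz
    rcases hz with hz | rfl
    exacts [hp z hz, hw]
  have hSa : ∀ x ∈ S, G.Adj x a := by
    rintro x ⟨hxW, hxB, w, hwB, hxw⟩
    by_contra hxa
    have hxa' : x ≠ a := by
      rintro rfl
      exact (hBR hwB).2.2 hxw.symm
    exact hxB (hBclosed w hwB x ⟨hxW, hxa', hxa⟩ hxw.symm)
  have hS : G.IsClique S := hG.isClique_of_forall_adj_of_walk fun x hx => by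
    obtain ⟨-, -, w, ⟨p, hp⟩, hxw⟩ := id hx
    exact ⟨hSa x hx, w, hxw, p, fun z hz => (hp z hz).2⟩
  refine ⟨W \ (B ∪ S), B, S, ⟨ha, ?_⟩, ⟨nil, ?_⟩, hS, ?_, ?_, ?_, ?_⟩
  · rintro (haB | haS)
    exacts [(hBR haB).2.1 rfl, G.irrefl (hSa a haS)]
  · simpa using ⟨hb, hab.symm, fun h => hnab h.symm⟩
  · rintro z (⟨hzW, hz⟩ | ⟨hzW, hzB, -⟩)
    exacts [⟨hzW, fun h => hz (.inl h)⟩, ⟨hzW, hzB⟩]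
  · intro z hz
    refine ⟨?_, fun h => h.2 hz⟩
    rcases hz with hz | hz
    exacts [(hBR hz).1, hz.1]
  · rintro v ⟨hvW, hv⟩ w ⟨hvw, hwW⟩
    by_cases hwS : w ∈ S
    · exact .inr hwS
    refine .inl ⟨hwW, ?_⟩
    rintro (hwB | hwS')
    exacts [hv (.inr ⟨hvW, fun h => hv (.inl h), w, hwB, hvw⟩), hwS hwS']
  · rintro v hv w ⟨hvw, hwW⟩
    by_cases hwB : w ∈ B
    exacts [.inl hwB, .inr ⟨hwW, hwB, v, hv, hvw.symm⟩]

theorem exists_isSimplicialIn_of_isClique_or {C S W : Set V} {c : V} (hc : c ∈ C)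
    (hS : G.IsClique S) (hN : ∀ v ∈ C, G.neighborSet v ∩ W ⊆ C ∪ S)
    (hdich : G.IsClique (C ∪ S) ∨ ∃ v ∈ C ∪ S, ∃ w ∈ C ∪ S, v ≠ w ∧ ¬ G.Adj v w ∧
      IsSimplicialIn G (C ∪ S) v ∧ IsSimplicialIn G (C ∪ S) w) :
    ∃ v ∈ C, IsSimplicialIn G W v := by
  have hlift : ∀ v ∈ C, IsSimplicialIn G (C ∪ S) v → IsSimplicialIn G W v :=
    fun v hv h => IsClique.subset (s := G.neighborSet v ∩ (C ∪ S))
      (fun z hz => ⟨hz.1, hN v hv hz⟩) h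
  rcases hdich with hCS | ⟨v, hvC | hvS, w, hwC | hwS, hvw, hnvw, hv, hw⟩
  · exact ⟨c, hc, hCS.subset (hN c hc)⟩
  · exact ⟨v, hvC, hlift v hvC hv⟩
  · exact ⟨v, hvC, hlift v hvC hv⟩
  · exact ⟨w, hwC, hlift w hwC hw⟩
  · exact absurd (hS hvS hwS hvw) hnvw

theorem _root_.Chordal.isClique_or_exists_isSimplicialIn [Finite V] (hG : Chordal G)
    (W : Set V) : G.IsClique W ∨ ∃ v ∈ W, ∃ w ∈ W, v ≠ w ∧ ¬ G.Adj v w ∧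
      IsSimplicialIn G W v ∧ IsSimplicialIn G W w := by
  induction hn : W.ncard using Nat.strong_induction_on generalizing W with
  | _ n IH =>
  have IH' (T : Set V) (hT : T ⊂ W) := IH _ (hn ▸ Set.ncard_lt_ncard hT) T rfl
  refine or_iff_not_imp_left.2 fun hW => ?_
  obtain ⟨a, ha, b, hb, hab, hnab⟩ : ∃ a ∈ W, ∃ b ∈ W, a ≠ b ∧ ¬ G.Adj a b := by
    simpa [IsClique, Set.Pairwise] using hW
  obtain ⟨A, B, S, haA, hbB, hS, hAW, hBW, hAN, hBN⟩ := hG.exists_cliqueSeparator ha hb hab hnab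
  obtain ⟨v, hvA, hv⟩ := exists_isSimplicialIn_of_isClique_or haA hS hAN <| IH' _ <|
    (Set.ssubset_iff_of_subset (hAW.trans Set.sdiff_subset)).2 ⟨b, hb, fun h => (hAW h).2 hbB⟩
  obtain ⟨w, hwB, hw⟩ := exists_isSimplicialIn_of_isClique_or hbB hS hBN <| IH' _ <|
    (Set.ssubset_iff_of_subset (hBW.trans Set.sdiff_subset)).2 ⟨a, ha, fun h => (hBW h).2 haA⟩
  refine ⟨v, (hAW (.inl hvA)).1, w, (hBW (.inl hwB)).1, ?_, fun hvw => ?_, hv, hw⟩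
  · rintro rfl
    exact (hAW (.inl hvA)).2 hwB
  · exact (hAW (hAN v hvA ⟨hvw, (hBW (.inl hwB)).1⟩)).2 hwB

end SimpleGraph

theorem stmt_2 {V : Type*} [Fintype V] (G : SimpleGraph V) (hch : Chordal G)
    (hnc : ∃ u w : V, u ≠ w ∧ ¬ G.Adj u w) :
    ∃ v w : V, v ≠ w ∧ ¬ G.Adj v w ∧ IsSimplicial G v ∧ IsSimplicial G w := by
  obtain ⟨u, w, huw, hnuw⟩ := hnc
  have hnclique : ¬ G.IsClique Set.univ := fun h => hnuw (h trivial trivial huw)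
  obtain ⟨v, -, w, -, hvw, hnvw, hv, hw⟩ :=
    (hch.isClique_or_exists_isSimplicialIn Set.univ).resolve_left hnclique
  simp only [IsSimplicialIn, Set.inter_univ] at hv hw
  exact ⟨v, w, hvw, hnvw, hv, hw⟩
end

section
/- Every chordal graph G satisfies χ(G) = ω(G), where χ is the chromatic number and ω is the clique number. -/
open SimpleGraph

namespace ChordalAux

variable {V : Type*} (G : SimpleGraph V)

/-- A function walk of length `k` from `x` to `y` staying inside `U`. -/
def WalkIn (U : Set V) (x y : V) (k : ℕ) (p : ℕ → V) : Prop :=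
  p 0 = x ∧ p k = y ∧ (∀ i ≤ k, p i ∈ U) ∧ ∀ i < k, G.Adj (p i) (p (i+1))

def ReachIn (U : Set V) (x y : V) : Prop := ∃ k p, WalkIn G U x y k p

variable {G}

lemma reachIn_refl {U : Set V} {x : V} (hx : x ∈ U) : ReachIn G U x x :=
  ⟨0, fun _ => x, rfl, rfl, fun _ _ => hx, fun i h => absurd h (Nat.not_lt_zero i)⟩

lemma WalkIn.mem {U : Set V} {x y k p} (h : WalkIn G U x y k p) {i : ℕ} (hi : i ≤ k) :
    p i ∈ U := h.2.2.1 i hi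

lemma reachIn_symm {U : Set V} {x y : V} (h : ReachIn G U x y) : ReachIn G U y x := by
  obtain ⟨k, p, h0, hk, hU, hadj⟩ := h
  refine ⟨k, fun i => p (k - i), by simp [hk], by simp [h0], fun i hi => hU _ (Nat.sub_le _ _),
    fun i hi => ?_⟩
  show G.Adj (p (k - i)) (p (k - (i+1)))
  have h1 : k - i = (k - (i+1)) + 1 := by omega
  rw [h1]
  exact (hadj (k - (i+1)) (by omega)).symm

lemma reachIn_trans {U : Set V} {x y z : V} (h1 : ReachIn G U x y) (h2 : ReachIn G U y z) :
    ReachIn G U x z := by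
  obtain ⟨k, p, hp0, hpk, hpU, hpadj⟩ := h1
  obtain ⟨l, q, hq0, hql, hqU, hqadj⟩ := h2
  refine ⟨k + l, fun i => if i ≤ k then p i else q (i - k), by simp [hp0], ?_, ?_, ?_⟩
  · show (if k + l ≤ k then p (k+l) else q (k + l - k)) = z
    by_cases h : l = 0
    · subst h; simpa [hpk, ← hq0] using hql
    · rw [if_neg (by omega : ¬ k + l ≤ k)]
      simpa using hql
  · intro i hi
    show (if i ≤ k then p i else q (i - k)) ∈ U
    by_cases h : i ≤ k
    · rw [if_pos h]; exact hpU i h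
    · rw [if_neg h]; exact hqU (i - k) (by omega)
  · intro i hi
    show G.Adj (if i ≤ k then p i else q (i - k)) (if i + 1 ≤ k then p (i+1) else q (i + 1 - k))
    rcases lt_trichotomy i k with h | h | h
    · rw [if_pos h.le, if_pos (by omega)]; exact hpadj i h
    · subst h
      by_cases h0 : l = 0
      · omega
      · rw [if_pos le_rfl, if_neg (by omega : ¬ i + 1 ≤ i)]
        have h2 : i + 1 - i = 1 := by omega
        rw [h2, hpk, ← hq0]
        exact hqadj 0 (by omega)
    · rw [if_neg (by omega : ¬ i ≤ k), if_neg (by omega : ¬ i + 1 ≤ k)]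
      have h2 : i + 1 - k = (i - k) + 1 := by omega
      rw [h2]
      exact hqadj (i - k) (by omega)

lemma reachIn_adj {U : Set V} {x y : V} (hx : x ∈ U) (hy : y ∈ U) (h : G.Adj x y) :
    ReachIn G U x y := by
  refine ⟨1, fun i => if i = 0 then x else y, by simp, by simp, ?_, ?_⟩
  · intro i hi
    rcases Nat.le_one_iff_eq_zero_or_eq_one.mp hi with h | h <;> simp [h, hx, hy]
  · intro i hi
    interval_cases i
    simpa using h

/-- Points on a walk from `x` are reachable from `x`. -/
lemma WalkIn.reachIn_getVert {U : Set V} {x y k p} (h : WalkIn G U x y k p) {i : ℕ}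
    (hi : i ≤ k) : ReachIn G U x (p i) :=
  ⟨i, p, h.1, rfl, fun j hj => h.2.2.1 j (le_trans hj hi), fun j hj => h.2.2.2 j (by omega)⟩


/-- Shortcut a walk across a chord. -/
lemma WalkIn.shortcut_adj {U : Set V} {x y k p} (h : WalkIn G U x y k p) {i j : ℕ}
    (hij : i + 1 < j) (hjk : j ≤ k) (hadj : G.Adj (p i) (p j)) :
    ∃ p', WalkIn G U x y (k - (j - i - 1)) p' := by
  obtain ⟨h0, hk, hU, hstep⟩ := h
  refine ⟨fun m => if m ≤ i then p m else p (m + (j - i - 1)), ?_, ?_, ?_, ?_⟩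
  · show (if 0 ≤ i then p 0 else _) = x
    rw [if_pos (Nat.zero_le i), h0]
  · show (if k - (j-i-1) ≤ i then p (k - (j-i-1)) else p (k - (j-i-1) + (j-i-1))) = y
    rw [if_neg (by omega), (by omega : k - (j-i-1) + (j-i-1) = k), hk]
  · intro m hm
    show (if m ≤ i then p m else p (m + (j-i-1))) ∈ U
    by_cases h : m ≤ i
    · rw [if_pos h]; exact hU m (by omega)
    · rw [if_neg h]; exact hU _ (by omega)
  · intro m hm
    show G.Adj (if m ≤ i then p m else p (m + (j-i-1)))
      (if m + 1 ≤ i then p (m+1) else p (m + 1 + (j-i-1)))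
    rcases lt_trichotomy m i with h | h | h
    · rw [if_pos h.le, if_pos (by omega)]; exact hstep m (by omega)
    · subst h
      rw [if_pos le_rfl, if_neg (by omega), (by omega : m + 1 + (j-m-1) = j)]
      exact hadj
    · rw [if_neg (by omega), if_neg (by omega),
        (by omega : m + 1 + (j-i-1) = (m + (j-i-1)) + 1)]
      exact hstep (m + (j-i-1)) (by omega)

/-- Shortcut a walk across a repeated vertex. -/
lemma WalkIn.shortcut_eq {U : Set V} {x y k p} (h : WalkIn G U x y k p) {i j : ℕ}
    (hij : i < j) (hjk : j ≤ k) (heq : p i = p j) :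
    ∃ p', WalkIn G U x y (k - (j - i)) p' := by
  obtain ⟨h0, hk, hU, hstep⟩ := h
  refine ⟨fun m => if m < i then p m else p (m + (j - i)), ?_, ?_, ?_, ?_⟩
  · show (if 0 < i then p 0 else p (0 + (j - i))) = x
    by_cases h : 0 < i
    · rw [if_pos h, h0]
    · rw [if_neg h, (by omega : 0 + (j - i) = j), ← heq, (by omega : i = 0), h0]
  · show (if k - (j-i) < i then p (k - (j-i)) else p (k - (j-i) + (j-i))) = y
    rw [if_neg (by omega), (by omega : k - (j-i) + (j-i) = k), hk]
  · intro m hm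
    show (if m < i then p m else p (m + (j-i))) ∈ U
    by_cases h : m < i
    · rw [if_pos h]; exact hU m (by omega)
    · rw [if_neg h]; exact hU _ (by omega)
  · intro m hm
    show G.Adj (if m < i then p m else p (m + (j-i)))
      (if m + 1 < i then p (m+1) else p (m + 1 + (j-i)))
    rcases lt_trichotomy (m+1) i with h | h | h
    · rw [if_pos (by omega), if_pos h]; exact hstep m (by omega)
    · rw [if_pos (by omega), if_neg (by omega), (by omega : m + 1 + (j-i) = j), ← heq, ← h]
      exact hstep m (by omega)
    · rw [if_neg (by omega), if_neg (by omega),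
        (by omega : m + 1 + (j-i) = (m + (j-i)) + 1)]
      exact hstep (m + (j-i)) (by omega)

/-- A minimal-length walk is an induced path. -/
lemma exists_min_walk {U : Set V} {x y : V} (h : ReachIn G U x y) :
    ∃ k p, WalkIn G U x y k p ∧
      (∀ i j, i ≤ k → j ≤ k → p i = p j → i = j) ∧
      (∀ i j, i < j → j ≤ k → G.Adj (p i) (p j) → j = i + 1) := by
  classical
  have hne : {k | ∃ p, WalkIn G U x y k p}.Nonempty := by
    obtain ⟨k, p, hp⟩ := h
    exact ⟨k, p, hp⟩
  set k := sInf {k | ∃ p, WalkIn G U x y k p} with hkdef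
  obtain ⟨p, hp⟩ : ∃ p, WalkIn G U x y k p := Nat.sInf_mem hne
  have hmin : ∀ m, m < k → ¬ ∃ p, WalkIn G U x y m p := fun m hm => Nat.notMem_of_lt_sInf hm
  refine ⟨k, p, hp, ?_, ?_⟩
  · intro i j hik hjk heq
    by_contra hne'
    rcases Nat.lt_or_ge i j with h' | h'
    · obtain ⟨p', hp'⟩ := hp.shortcut_eq h' hjk heq
      exact hmin _ (by omega) ⟨p', hp'⟩
    · have h'' : j < i := by omega
      obtain ⟨p', hp'⟩ := hp.shortcut_eq h'' hik heq.symm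
      exact hmin _ (by omega) ⟨p', hp'⟩
  · intro i j hij hjk hadj
    by_contra hne'
    obtain ⟨p', hp'⟩ := hp.shortcut_adj (by omega) hjk hadj
    exact hmin _ (by omega) ⟨p', hp'⟩


/-- Chordal graphs contain no pair of internally disjoint, non-crossing induced arcs
of length `≥ 2` between the same pair of vertices. -/
lemma no_two_arcs (hch : Chordal G) {x y : V} {k l : ℕ} {p q : ℕ → V}
    (hk : 2 ≤ k) (hl : 2 ≤ l)
    (hp0 : p 0 = x) (hpk : p k = y) (hq0 : q 0 = x) (hql : q l = y)
    (hpstep : ∀ i < k, G.Adj (p i) (p (i+1)))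
    (hqstep : ∀ i < l, G.Adj (q i) (q (i+1)))
    (hpchord : ∀ i j, i < j → j ≤ k → G.Adj (p i) (p j) → j = i + 1)
    (hqchord : ∀ i j, i < j → j ≤ l → G.Adj (q i) (q j) → j = i + 1)
    (hpinj : ∀ i j, i ≤ k → j ≤ k → p i = p j → i = j)
    (hqinj : ∀ i j, i ≤ l → j ≤ l → q i = q j → i = j)
    (hcrossAdj : ∀ i j, 1 ≤ i → i < k → 1 ≤ j → j < l → ¬ G.Adj (p i) (q j))
    (hcrossNe : ∀ i j, 1 ≤ i → i < k → 1 ≤ j → j < l → p i ≠ q j) : False := by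
  classical
  set n := k + l with hn
  have hn4 : 4 ≤ n := by omega
  haveI : NeZero n := ⟨by omega⟩
  -- full adjacency characterization of the arcs
  have hpadj : ∀ i j, i ≤ k → j ≤ k → (G.Adj (p i) (p j) ↔ (j = i + 1 ∨ i = j + 1)) := by
    intro i j hi hj
    constructor
    · intro h
      rcases lt_trichotomy i j with h' | h' | h'
      · exact Or.inl ((hpchord i j h' hj h).symm ▸ rfl)
      · exact absurd (h' ▸ h) (G.irrefl)
      · exact Or.inr ((hpchord j i h' hi h.symm).symm ▸ rfl)
    · rintro (rfl | rfl)
      · exact hpstep i (by omega)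
      · exact (hpstep j (by omega)).symm
  have hqadj : ∀ i j, i ≤ l → j ≤ l → (G.Adj (q i) (q j) ↔ (j = i + 1 ∨ i = j + 1)) := by
    intro i j hi hj
    constructor
    · intro h
      rcases lt_trichotomy i j with h' | h' | h'
      · exact Or.inl ((hqchord i j h' hj h).symm ▸ rfl)
      · exact absurd (h' ▸ h) (G.irrefl)
      · exact Or.inr ((hqchord j i h' hi h.symm).symm ▸ rfl)
    · rintro (rfl | rfl)
      · exact hqstep i (by omega)
      · exact (hqstep j (by omega)).symm
  have hmod2 : ∀ m, m < 2 * n → m % n = if m < n then m else m - n := by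
    intro m hm
    by_cases h : m < n
    · rw [if_pos h, Nat.mod_eq_of_lt h]
    · rw [if_neg h, Nat.mod_eq_sub_mod (by omega), Nat.mod_eq_of_lt (by omega)]
  have hsucc : ∀ a b : ℕ, a < n → b < n →
      (b = (a+1) % n ↔ (b = a + 1 ∨ (a + 1 = n ∧ b = 0))) := by
    intro a b ha hb
    rw [hmod2 (a+1) (by omega)]
    split_ifs with h <;> omega
  -- the cyclic arrangement
  set C : ℕ → V := fun a => if a ≤ k then p a else q (n - a) with hC
  have hCp : ∀ a, a ≤ k → C a = p a := fun a ha => if_pos ha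
  have hCq : ∀ a, k < a → C a = q (n - a) := fun a ha => if_neg (by omega)
  -- adjacency characterization, assuming `a ≤ b`
  have key : ∀ a b, a < n → b < n → a ≤ b →
      (G.Adj (C a) (C b) ↔ (b = (a+1) % n ∨ a = (b+1) % n)) := by
    intro a b ha hb hab
    rw [hsucc a b ha hb, hsucc b a hb ha]
    by_cases hbk : b ≤ k
    · rw [hCp a (by omega), hCp b hbk, hpadj a b (by omega) hbk]
      omega
    · push_neg at hbk
      have hnb1 : 1 ≤ n - b := by omega
      have hnb2 : n - b ≤ l - 1 := by omega
      by_cases hak : a ≤ k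
      · rw [hCp a hak, hCq b hbk]
        rcases Nat.lt_trichotomy 0 a with h0 | h0 | h0
        · rcases Nat.lt_or_ge a k with hak' | hak'
          · -- interior of p : no adjacency
            exact iff_of_false (hcrossAdj a (n-b) h0 hak' hnb1 (by omega)) (by omega)
          · -- a = k : C a = y = q l
            have hay : a = k := by omega
            rw [(by rw [hay, hpk, hql] : p a = q l), hqadj l (n - b) le_rfl (by omega)]
            omega
        · rw [(by rw [← h0, hp0, hq0] : p a = q 0), hqadj 0 (n - b) (by omega) (by omega)]
          omega
        · omega
      · push_neg at hak
        rw [hCq a hak, hCq b hbk, hqadj (n - a) (n - b) (by omega) (by omega)]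
        omega
  have keyAll : ∀ a b, a < n → b < n →
      (G.Adj (C a) (C b) ↔ (b = (a+1) % n ∨ a = (b+1) % n)) := by
    intro a b ha hb
    rcases le_total a b with h | h
    · exact key a b ha hb h
    · rw [adj_comm, key b a hb ha h, or_comm]
  -- injectivity
  have keyInj : ∀ a b, a < n → b < n → C a = C b → a = b := by
    have base : ∀ a b, a < n → b < n → a ≤ b → C a = C b → a = b := by
      intro a b ha hb hab heq
      by_cases hbk : b ≤ k
      · rw [hCp a (by omega), hCp b hbk] at heq
        exact hpinj a b (by omega) hbk heq
      · push_neg at hbk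
        have hnb1 : 1 ≤ n - b := by omega
        have hnb2 : n - b ≤ l - 1 := by omega
        by_cases hak : a ≤ k
        · rw [hCp a hak, hCq b hbk] at heq
          rcases Nat.lt_trichotomy 0 a with h0 | h0 | h0
          · rcases Nat.lt_or_ge a k with hak' | hak'
            · exact absurd heq (hcrossNe a (n-b) h0 hak' hnb1 (by omega))
            · have hay : a = k := by omega
              rw [hay, hpk, ← hql] at heq
              have := hqinj l (n - b) le_rfl (by omega) heq
              omega
          · rw [← h0, hp0, ← hq0] at heq
            have := hqinj 0 (n - b) (by omega) (by omega) heq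
            omega
          · omega
        · push_neg at hak
          rw [hCq a hak, hCq b hbk] at heq
          have := hqinj (n - a) (n - b) (by omega) (by omega) heq
          omega
    intro a b ha hb heq
    rcases le_total a b with h | h
    · exact base a b ha hb h heq
    · exact (base b a hb ha h heq.symm).symm
  -- cycle graph adjacency in terms of naturals
  have cycAdj : ∀ u v : Fin n, (cycleGraph n).Adj u v ↔
      ((v : ℕ) = ((u : ℕ) + 1) % n ∨ (u : ℕ) = ((v : ℕ) + 1) % n) := by
    intro u v
    rw [cycleGraph_adj']
    have h1 : ∀ w z : Fin n, ((w - z).val = 1 ↔ (w : ℕ) = ((z : ℕ) + 1) % n) := by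
      intro w z
      have hz : (z : ℕ) < n := z.isLt
      have hw : (w : ℕ) < n := w.isLt
      rw [Fin.sub_def]
      simp only [Fin.val_mk]
      rw [hmod2 (n - (z : ℕ) + (w : ℕ)) (by omega), hsucc (z : ℕ) (w : ℕ) hz hw]
      split_ifs with h <;> omega
    rw [h1 u v, h1 v u, or_comm]
  -- assemble the embedding
  have emb : cycleGraph n ↪g G := by
    refine ⟨⟨fun u => C (u : ℕ), fun u v huv => ?_⟩, ?_⟩
    · exact Fin.ext (keyInj _ _ u.isLt v.isLt huv)
    · intro u v
      show G.Adj (C (u : ℕ)) (C (v : ℕ)) ↔ (cycleGraph n).Adj u v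
      rw [keyAll _ _ u.isLt v.isLt, cycAdj u v, or_comm]
  exact (hch n hn4).false emb


/-- `v` is simplicial within `T`: its neighborhood inside `T` is a clique. -/
def SimplIn (G : SimpleGraph V) (T : Set V) (v : V) : Prop :=
  v ∈ T ∧ ∀ ⦃u w⦄, u ∈ T → w ∈ T → G.Adj v u → G.Adj v w → u ≠ w → G.Adj u w

lemma reachIn_mono {U U' : Set V} (h : U ⊆ U') {x y : V} (hr : ReachIn G U x y) :
    ReachIn G U' x y := by
  obtain ⟨k, p, h0, hk, hU, hadj⟩ := hr
  exact ⟨k, p, h0, hk, fun i hi => h (hU i hi), hadj⟩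

lemma reach_subset_pair {U : Set V} {x y : V} (h : ReachIn G U x y) (hU : U ⊆ {x, y})
    (hne : x ≠ y) (hnadj : ¬ G.Adj x y) : False := by
  obtain ⟨k, p, h0, hk, hUm, hadj⟩ := h
  rcases Nat.eq_zero_or_pos k with rfl | hkpos
  · exact hne (by rw [← h0, hk])
  · have h1 : G.Adj x (p 1) := h0 ▸ hadj 0 (by omega)
    rcases hU (hUm 1 (by omega)) with h2 | h2
    · exact G.irrefl (h2 ▸ h1)
    · exact hnadj (h2 ▸ h1)

/-- Dirac: within any vertex subset of a chordal graph, either the set is a clique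
or it contains two nonadjacent simplicial vertices. -/
lemma dirac [Fintype V] (hch : Chordal G) (T : Set V) :
    (∀ x ∈ T, ∀ y ∈ T, x ≠ y → G.Adj x y) ∨
    (∃ x ∈ T, ∃ y ∈ T, x ≠ y ∧ ¬ G.Adj x y ∧ SimplIn G T x ∧ SimplIn G T y) := by
  classical
  suffices H : ∀ n (T : Set V), T.ncard = n →
      ((∀ x ∈ T, ∀ y ∈ T, x ≠ y → G.Adj x y) ∨
      (∃ x ∈ T, ∃ y ∈ T, x ≠ y ∧ ¬ G.Adj x y ∧ SimplIn G T x ∧ SimplIn G T y)) from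
    H _ T rfl
  intro n
  induction n using Nat.strong_induction_on with
  | _ n IH =>
  intro T hn
  by_cases hcomp : ∀ x ∈ T, ∀ y ∈ T, x ≠ y → G.Adj x y
  · exact Or.inl hcomp
  right
  push_neg at hcomp
  obtain ⟨x, hxT, y, hyT, hxy, hnadj⟩ := hcomp
  -- separators
  set Sep : Set V → Prop :=
    fun S => S ⊆ T ∧ x ∉ S ∧ y ∉ S ∧ ¬ ReachIn G (T \ S) x y with hSepDef
  have hSep0 : Sep (T \ {x, y}) := by
    refine ⟨Set.diff_subset, by simp [hxy], by simp, fun hr => ?_⟩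
    refine reach_subset_pair hr ?_ hxy hnadj
    intro z hz
    by_contra hcon
    exact hz.2 ⟨hz.1, hcon⟩
  -- a separator of minimum cardinality
  have hset : {m | ∃ S, Sep S ∧ S.ncard = m}.Nonempty := ⟨_, _, hSep0, rfl⟩
  obtain ⟨S, hS, hScard⟩ : ∃ S, Sep S ∧ S.ncard = sInf {m | ∃ S, Sep S ∧ S.ncard = m} :=
    Nat.sInf_mem hset
  have hSmin : ∀ S', Sep S' → S.ncard ≤ S'.ncard := by
    intro S' hS'
    rw [hScard]
    exact Nat.sInf_le ⟨S', hS', rfl⟩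
  obtain ⟨hST, hxS, hyS, hsep⟩ := hS
  have hxTS : x ∈ T \ S := ⟨hxT, hxS⟩
  have hyTS : y ∈ T \ S := ⟨hyT, hyS⟩
  -- components
  set comp : V → Set V := fun z => {w | w ∈ T \ S ∧ ReachIn G (T \ S) z w} with hcompDef
  have hmemz : ∀ z, z ∈ T \ S → z ∈ comp z := fun z hz => ⟨hz, reachIn_refl hz⟩
  have hclosure : ∀ z w u, w ∈ comp z → u ∈ T \ S → G.Adj w u → u ∈ comp z := by
    intro z w u hw hu hadj
    exact ⟨hu, reachIn_trans hw.2 (reachIn_adj hw.1 hu hadj)⟩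
  have hdisj : ∀ w, w ∈ comp x → w ∈ comp y → False := by
    intro w hwx hwy
    exact hsep (reachIn_trans hwx.2 (reachIn_symm hwy.2))
  have hnoedge : ∀ w u, w ∈ comp x → u ∈ comp y → ¬ G.Adj w u := by
    intro w u hw hu hadj
    exact hdisj u (hclosure x w u hw hu.1 hadj) hu
  have hnePt : ∀ w u, w ∈ comp x → u ∈ comp y → w ≠ u := by
    intro w u hw hu heq
    exact hdisj u (heq ▸ hw) hu
  -- walks within T \ S starting at z stay in comp z
  have hstay : ∀ z w, z ∈ T \ S → ReachIn G (T \ S) z w → ReachIn G (comp z) z w := by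
    intro z w hz hr
    obtain ⟨k, p, h0, hk, hU, hadj⟩ := hr
    refine ⟨k, p, h0, hk, fun i hi => ?_, hadj⟩
    refine ⟨hU i hi, ?_⟩
    exact h0 ▸ WalkIn.reachIn_getVert ⟨h0, hk, hU, hadj⟩ hi
  -- minimality: every separator vertex has a neighbor in each endpoint component
  have hnbr : ∀ s ∈ S, ∀ z z', z ∈ T \ S → z' ∈ T \ S →
      (¬ ReachIn G (T \ S) z z') →
      ((z = x ∧ z' = y) ∨ (z = y ∧ z' = x)) → ∃ w ∈ comp z, G.Adj s w := by
    intro s hsS z z' hz hz' hzz' hcase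
    by_contra hno
    push_neg at hno
    have hSep' : Sep (S \ {s}) := by
      refine ⟨fun u hu => hST hu.1, fun h => hxS h.1, fun h => hyS h.1, fun hr => ?_⟩
      -- any x-y walk avoiding S \ {s} stays in comp z, contradiction
      have hzz : ReachIn G (T \ (S \ {s})) z z' := by
        rcases hcase with ⟨rfl, rfl⟩ | ⟨rfl, rfl⟩
        · exact hr
        · exact reachIn_symm hr
      obtain ⟨k, p, h0, hk, hU, hadj⟩ := hzz
      have hall : ∀ i ≤ k, p i ∈ comp z := by
        intro i hi
        induction i with
        | zero => exact h0 ▸ hmemz z hz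
        | succ m ihm =>
          have hm : p m ∈ comp z := ihm (by omega)
          have hmem : p (m+1) ∈ T \ (S \ {s}) := hU (m+1) hi
          have hadj' : G.Adj (p m) (p (m+1)) := hadj m (by omega)
          by_cases hps : p (m+1) ∈ S
          · have : p (m+1) = s := by
              by_contra hne
              exact (hmem.2 ⟨hps, hne⟩)
            exact absurd (this ▸ hadj'.symm) (hno (p m) hm)
          · exact hclosure z (p m) (p (m+1)) hm ⟨hmem.1, hps⟩ hadj'
      have : p k ∈ comp z := hall k le_rfl
      rw [hk] at this
      exact hzz' this.2
    have hlt : (S \ {s}).ncard < S.ncard := by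
      refine Set.ncard_lt_ncard ?_ (Set.toFinite S)
      exact ⟨Set.diff_subset, fun h => (h hsS).2 rfl⟩
    exact absurd (hSmin _ hSep') (by omega)
  have hnbrx : ∀ s ∈ S, ∃ w ∈ comp x, G.Adj s w := fun s hs =>
    hnbr s hs x y hxTS hyTS hsep (Or.inl ⟨rfl, rfl⟩)
  have hnbry : ∀ s ∈ S, ∃ w ∈ comp y, G.Adj s w := fun s hs =>
    hnbr s hs y x hyTS hxTS (fun h => hsep (reachIn_symm h)) (Or.inr ⟨rfl, rfl⟩)
  -- S is a clique
  have hSclique : ∀ s ∈ S, ∀ t ∈ S, s ≠ t → G.Adj s t := by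
    intro s hs t ht hst
    by_contra hnadj'
    -- build the two arcs
    have harc : ∀ z : V, z ∈ T \ S → (∀ s' ∈ S, ∃ w ∈ comp z, G.Adj s' w) →
        ∃ k p, WalkIn G (comp z ∪ {s, t}) s t k p ∧ 2 ≤ k ∧
          (∀ i j, i ≤ k → j ≤ k → p i = p j → i = j) ∧
          (∀ i j, i < j → j ≤ k → G.Adj (p i) (p j) → j = i + 1) ∧
          (∀ i, 0 < i → i < k → p i ∈ comp z) := by
      intro z hz hnb
      obtain ⟨ws, hws, hadjs⟩ := hnb s hs
      obtain ⟨wt, hwt, hadjt⟩ := hnb t ht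
      have hsU : s ∈ comp z ∪ {s, t} := Or.inr (Or.inl rfl)
      have htU : t ∈ comp z ∪ {s, t} := Or.inr (Or.inr rfl)
      have hr1 : ReachIn G (comp z ∪ {s, t}) s ws :=
        reachIn_adj hsU (Or.inl hws) hadjs
      have hr2 : ReachIn G (comp z ∪ {s, t}) ws wt := by
        refine reachIn_mono Set.subset_union_left ?_
        exact reachIn_trans (reachIn_symm (hstay z ws hz hws.2)) (hstay z wt hz hwt.2)
      have hr3 : ReachIn G (comp z ∪ {s, t}) wt t :=
        reachIn_adj (Or.inl hwt) htU hadjt.symm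
      obtain ⟨k, p, hp, hinj, hchord⟩ :=
        exists_min_walk (reachIn_trans (reachIn_trans hr1 hr2) hr3)
      have hsnc : s ∉ comp z := fun h => h.1.2 hs
      have htnc : t ∉ comp z := fun h => h.1.2 ht
      refine ⟨k, p, hp, ?_, hinj, hchord, ?_⟩
      · rcases Nat.lt_or_ge k 2 with hk2 | hk2
        · interval_cases k
          · exact absurd (hp.1 ▸ hp.2.1) hst
          · exact absurd (hp.1 ▸ hp.2.1 ▸ hp.2.2.2 0 (by omega)) hnadj'
        · exact hk2
      · intro i h0i hik
        rcases hp.2.2.1 i (by omega) with h | h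
        · exact h
        · exfalso
          rcases h with h | h
          · exact absurd (hinj i 0 (by omega) (by omega) (by rw [h, hp.1]))
              (by omega)
          · exact absurd (hinj i k (by omega) le_rfl (by rw [h, hp.2.1]))
              (by omega)
    obtain ⟨k, p, hp, hk2, hpinj, hpchord, hpint⟩ := harc x hxTS hnbrx
    obtain ⟨l, q, hq, hl2, hqinj, hqchord, hqint⟩ := harc y hyTS hnbry
    refine no_two_arcs hch hk2 hl2 hp.1 hp.2.1 hq.1 hq.2.1 hp.2.2.2 hq.2.2.2
      hpchord hqchord hpinj hqinj ?_ ?_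
    · intro i j h1 h2 h3 h4
      exact hnoedge (p i) (q j) (hpint i h1 h2) (hqint j h3 h4)
    · intro i j h1 h2 h3 h4
      exact hnePt (p i) (q j) (hpint i h1 h2) (hqint j h3 h4)
  -- extract a simplicial vertex inside each component
  have hextract : ∀ z z', z ∈ T \ S → z' ∈ T \ S → z' ∉ comp z →
      ∃ u ∈ comp z, SimplIn G T u := by
    intro z z' hz hz' hnc
    have hsub : comp z ∪ S ⊆ T := by
      intro u hu
      rcases hu with hu | hu
      · exact hu.1.1
      · exact hST hu
    have hlt : (comp z ∪ S).ncard < n := by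
      rw [← hn]
      refine Set.ncard_lt_ncard ?_ (Set.toFinite T)
      refine ⟨hsub, fun h => ?_⟩
      rcases h hz'.1 with h' | h'
      · exact hnc h'
      · exact hz'.2 h'
    -- neighbors (within T) of a component vertex lie in comp z ∪ S
    have hnbhd : ∀ u w, u ∈ comp z → w ∈ T → G.Adj u w → w ∈ comp z ∪ S := by
      intro u w hu hw hadj
      by_cases hwS : w ∈ S
      · exact Or.inr hwS
      · exact Or.inl (hclosure z u w hu ⟨hw, hwS⟩ hadj)
    have hsimp : ∀ u, u ∈ comp z → SimplIn G (comp z ∪ S) u → SimplIn G T u := by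
      intro u hu hsi
      refine ⟨hu.1.1, fun v w hv hw hav haw hvw => ?_⟩
      exact hsi.2 (hnbhd u v hu hv hav) (hnbhd u w hu hw haw) hav haw hvw
    rcases IH _ hlt (comp z ∪ S) rfl with hc | ⟨a, ha, b, hb, hab, hnab, hsa, hsb⟩
    · -- comp z ∪ S is a clique: z itself is simplicial in T
      refine ⟨z, hmemz z hz, ?_⟩
      refine hsimp z (hmemz z hz) ⟨Or.inl (hmemz z hz), fun v w hv hw hav haw hvw => ?_⟩
      exact hc v hv w hw hvw
    · -- two nonadjacent simplicial vertices: at least one is in comp z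
      have : a ∈ comp z ∨ b ∈ comp z := by
        by_contra hcon
        push_neg at hcon
        have haS : a ∈ S := ha.resolve_left hcon.1
        have hbS : b ∈ S := hb.resolve_left hcon.2
        exact hnab (hSclique a haS b hbS hab)
      rcases this with h | h
      · exact ⟨a, h, hsimp a h hsa⟩
      · exact ⟨b, h, hsimp b h hsb⟩
  obtain ⟨u, huA, hus⟩ := hextract x y hxTS hyTS (fun h => hdisj y h (hmemz y hyTS))
  obtain ⟨w, hwB, hws⟩ := hextract y x hyTS hxTS (fun h => hdisj x (hmemz x hxTS) h)
  exact ⟨u, hus.1, w, hws.1, hnePt u w huA hwB, hnoedge u w huA hwB, hus, hws⟩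


lemma exists_simplicial [Fintype V] (hch : Chordal G) {T : Set V} (hT : T.Nonempty) :
    ∃ v ∈ T, SimplIn G T v := by
  rcases dirac hch T with hc | ⟨a, ha, b, hb, _, _, hsa, _⟩
  · obtain ⟨v, hv⟩ := hT
    exact ⟨v, hv, hv, fun u w hu hw hau haw huw => hc u hu w hw huw⟩
  · exact ⟨a, ha, hsa⟩

lemma greedy [Fintype V] (hch : Chordal G) (T : Set V) :
    ∃ C : V → ℕ, (∀ u ∈ T, ∀ w ∈ T, G.Adj u w → C u ≠ C w) ∧
      (∀ v ∈ T, C v < G.cliqueNum) := by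
  classical
  suffices H : ∀ n (T : Set V), T.ncard = n →
      ∃ C : V → ℕ, (∀ u ∈ T, ∀ w ∈ T, G.Adj u w → C u ≠ C w) ∧
      (∀ v ∈ T, C v < G.cliqueNum) from H _ T rfl
  intro n
  induction n using Nat.strong_induction_on with
  | _ n IH =>
  intro T hn
  rcases Set.eq_empty_or_nonempty T with rfl | hT
  · exact ⟨fun _ => 0, by simp, by simp⟩
  obtain ⟨v, hvT, hvs⟩ := exists_simplicial hch hT
  set T' := T \ {v} with hT'
  have hlt : T'.ncard < n := by
    rw [← hn]
    exact Set.ncard_lt_ncard (Set.sdiff_singleton_ssubset.mpr hvT) (Set.toFinite T)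
  obtain ⟨C', hC1, hC2⟩ := IH _ hlt T' rfl
  -- the neighbors of v within T, as a finset
  set Nb : Finset V := Finset.univ.filter (fun u => u ∈ T ∧ u ≠ v ∧ G.Adj v u) with hNb
  have hNbmem : ∀ u, u ∈ Nb ↔ (u ∈ T ∧ u ≠ v ∧ G.Adj v u) := by
    intro u; simp [hNb]
  -- {v} ∪ Nb is a clique
  have hclique : G.IsClique (insert v Nb : Finset V) := by
    intro a ha b hb hab
    simp only [Finset.coe_insert, Set.mem_insert_iff, Finset.mem_coe] at ha hb
    rcases ha with rfl | ha <;> rcases hb with rfl | hb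
    · exact absurd rfl hab
    · exact ((hNbmem b).mp hb).2.2
    · exact (((hNbmem a).mp ha).2.2).symm
    · have ha' := (hNbmem a).mp ha
      have hb' := (hNbmem b).mp hb
      exact hvs.2 ha'.1 hb'.1 ha'.2.2 hb'.2.2 hab
  have hcard : (insert v Nb).card ≤ G.cliqueNum := by
    exact SimpleGraph.IsClique.card_le_cliqueNum (G := G) (t := insert v Nb) (tc := hclique)
  have hNbcard : Nb.card < G.cliqueNum := by
    have hvNb : v ∉ Nb := by
      intro h
      exact ((hNbmem v).mp h).2.1 rfl
    rw [Finset.card_insert_of_notMem hvNb] at hcard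
    omega
  -- a free color
  have hfree : ∃ c, c < G.cliqueNum ∧ ∀ u ∈ Nb, C' u ≠ c := by
    by_contra hcon
    push_neg at hcon
    have hsub : Finset.range G.cliqueNum ⊆ Nb.image C' := by
      intro c hc
      rw [Finset.mem_range] at hc
      obtain ⟨u, hu, hcu⟩ := hcon c hc
      exact Finset.mem_image.mpr ⟨u, hu, hcu⟩
    have := Finset.card_le_card hsub
    rw [Finset.card_range] at this
    have := Finset.card_image_le (s := Nb) (f := C')
    omega
  obtain ⟨c, hcN, hcfree⟩ := hfree
  refine ⟨fun u => if u = v then c else C' u, ?_, ?_⟩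
  · intro u hu w hw hadj
    show (if u = v then c else C' u) ≠ (if w = v then c else C' w)
    by_cases huv : u = v <;> by_cases hwv : w = v
    · subst huv; subst hwv; exact absurd hadj (G.irrefl)
    · subst huv
      rw [if_pos rfl, if_neg hwv]
      have hwNb : w ∈ Nb := (hNbmem w).mpr ⟨hw, hwv, hadj⟩
      exact fun h => hcfree w hwNb h.symm
    · subst hwv
      rw [if_pos rfl, if_neg huv]
      have huNb : u ∈ Nb := (hNbmem u).mpr ⟨hu, huv, hadj.symm⟩
      exact hcfree u huNb
    · rw [if_neg huv, if_neg hwv]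
      exact hC1 u ⟨hu, huv⟩ w ⟨hw, hwv⟩ hadj
  · intro u hu
    show (if u = v then c else C' u) < G.cliqueNum
    by_cases huv : u = v
    · rw [if_pos huv]; exact hcN
    · rw [if_neg huv]; exact hC2 u ⟨hu, huv⟩

lemma colorable_cliqueNum [Fintype V] (hch : Chordal G) : G.Colorable G.cliqueNum := by
  obtain ⟨C, hC1, hC2⟩ := greedy hch (Set.univ : Set V)
  exact ⟨⟨fun v => ⟨C v, hC2 v trivial⟩,
    fun {u w} hadj => by
      intro h
      exact hC1 u trivial w trivial hadj (congrArg Fin.val h)⟩⟩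

lemma cliqueNum_le_of_colorable [Fintype V] {m : ℕ} (h : G.Colorable m) :
    G.cliqueNum ≤ m := by
  classical
  obtain ⟨s, hs⟩ := G.exists_isNClique_cliqueNum
  obtain ⟨C⟩ := h
  rw [← hs.card_eq]
  have : s.card ≤ (Finset.univ : Finset (Fin m)).card := by
    refine Finset.card_le_card_of_injOn (fun u => C u) (fun _ _ => Finset.mem_univ _) ?_
    intro u hu w hw heq
    by_contra hne
    exact C.valid (hs.isClique hu hw hne) heq
  simpa using this

end ChordalAux

theorem stmt_3 {V : Type*} [Fintype V] (G : SimpleGraph V) (hch : Chordal G) :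
    G.chromaticNumber = (G.cliqueNum : ℕ∞) := by
  classical
  have h1 : G.Colorable G.cliqueNum := ChordalAux.colorable_cliqueNum hch
  refine le_antisymm h1.chromaticNumber_le ?_
  have h2 : G.Colorable (ENat.toNat G.chromaticNumber) :=
    G.colorable_chromaticNumber_of_fintype
  have h3 : G.cliqueNum ≤ ENat.toNat G.chromaticNumber :=
    ChordalAux.cliqueNum_le_of_colorable h2
  have h4 : G.chromaticNumber ≠ ⊤ := by
    rw [chromaticNumber_ne_top_iff_exists]
    exact ⟨_, h1⟩
  calc (G.cliqueNum : ℕ∞) ≤ (ENat.toNat G.chromaticNumber : ℕ∞) := by exact_mod_cast h3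
    _ = G.chromaticNumber := ENat.coe_toNat h4
end

section
/- Let p, q be positive integers and G a graph containing an induced subgraph H such that: (1) every maximal clique K of G contains at least p − (ω(G) − |K|) vertices of H, and (2) H is q-colorable. If χ(G − V(H)) ≤ ⌈(q/p)·ω(G − V(H))⌉, then χ(G) ≤ ⌈(q/p)·ω(G)⌉. -/
open SimpleGraph

/-- A maximal clique of `G`: a clique contained in no strictly larger clique. -/
def IsMaximalClique {V : Type*} (G : SimpleGraph V) (K : Finset V) : Prop :=
  G.IsClique (K : Set V) ∧ ∀ K' : Finset V, G.IsClique (K' : Set V) → K ⊆ K' → K' = K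

/-!
A maximum clique of `G - S` extends to a maximal clique `K` of `G`; since `K` meets `S` in at
least `p + |K| - ω(G)` vertices, all outside that clique, `ω(G - S) + p ≤ ω(G)`. Colour `S` with
`q` colours and `G - S` with `⌈q ω(G - S) / p⌉ ≤ ⌈q ω(G) / p⌉ - q` further ones.
-/

namespace SimpleGraph

variable {V : Type*} {G : SimpleGraph V}

lemma IsClique.exists_isMaximalClique_superset [Finite V] {C : Finset V}
    (hC : G.IsClique (C : Set V)) : ∃ K, IsMaximalClique G K ∧ C ⊆ K := by
  obtain ⟨K, hCK, hK⟩ := Finite.exists_le_maximal (p := fun K : Finset V => G.IsClique K) hC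
  exact ⟨K, ⟨hK.prop, fun K' hK' hKK' => (hK.eq_of_le hK' hKK').symm⟩, hCK⟩

theorem colorable_add_of_induce_of_induce_compl {s : Set V} {a b : ℕ}
    (hs : (G.induce s).Colorable a) (hsc : (G.induce sᶜ).Colorable b) :
    G.Colorable (a + b) := by
  classical
  obtain ⟨c⟩ := hs
  obtain ⟨c'⟩ := hsc
  let C : G.Coloring (Fin a ⊕ Fin b) :=
    Coloring.mk (fun v => if h : v ∈ s then .inl (c ⟨v, h⟩) else .inr (c' ⟨v, h⟩)) <| by
      intro u v huv
      by_cases hu : u ∈ s <;> by_cases hv : v ∈ s <;> simp only [hu, hv, dite_true, dite_false,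
        ne_eq, reduceCtorEq, not_false_eq_true, Sum.inl.injEq, Sum.inr.injEq]
      · exact c.valid (show (G.induce s).Adj ⟨u, hu⟩ ⟨v, hv⟩ from huv)
      · exact c'.valid (show (G.induce sᶜ).Adj ⟨u, hu⟩ ⟨v, hv⟩ from huv)
  simpa using C.colorable

section Good

variable [Fintype V] [DecidableEq V] {p : ℕ} {S : Finset V}

lemma IsClique.add_card_le_cliqueNum_of_disjoint
    (hgood : ∀ K : Finset V, IsMaximalClique G K → p + K.card ≤ (K ∩ S).card + G.cliqueNum)
    {C : Finset V} (hC : G.IsClique (C : Set V)) (hCS : Disjoint C S) :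
    p + C.card ≤ G.cliqueNum := by
  obtain ⟨K, hK, hCK⟩ := hC.exists_isMaximalClique_superset
  have hsplit : C.card + (K ∩ S).card ≤ K.card := by
    rw [← Finset.card_union_of_disjoint (hCS.mono_right Finset.inter_subset_right)]
    exact Finset.card_le_card (Finset.union_subset hCK Finset.inter_subset_left)
  have := hgood K hK
  omega

lemma cliqueNum_induce_compl_add_le
    (hgood : ∀ K : Finset V, IsMaximalClique G K → p + K.card ≤ (K ∩ S).card + G.cliqueNum) :
    (G.induce ((S : Set V)ᶜ)).cliqueNum + p ≤ G.cliqueNum := by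
  obtain ⟨t, ht⟩ := (G.induce ((S : Set V)ᶜ)).exists_isNClique_cliqueNum
  rw [isNClique_induce_iff] at ht
  have hdisj : Disjoint (t.map (.subtype _)) S := by
    simp only [Finset.disjoint_left, Finset.mem_map, Function.Embedding.coe_subtype]
    rintro _ ⟨⟨v, hv⟩, -, rfl⟩
    simpa using hv
  have := ht.isClique.add_card_le_cliqueNum_of_disjoint hgood hdisj
  rw [ht.card_eq] at this
  omega

end Good

end SimpleGraph

theorem Nat.add_ceil_mul_div_le_ceil_mul_div {K : Type*} [Field K] [LinearOrder K]
    [IsStrictOrderedRing K] [FloorSemiring K] {a b p : ℕ} (q : ℕ) (hp : 0 < p)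
    (hab : a + p ≤ b) : q + ⌈(q * a : K) / p⌉₊ ≤ ⌈(q * b : K) / p⌉₊ := by
  have hp' : (0 : K) < p := by exact_mod_cast hp
  have hshift : (q * a : K) / p + q ≤ (q * b : K) / p := by
    rw [div_add' _ _ _ hp'.ne', div_le_div_iff_of_pos_right hp', ← mul_add]
    exact mul_le_mul_of_nonneg_left (by exact_mod_cast hab) (Nat.cast_nonneg q)
  calc q + ⌈(q * a : K) / p⌉₊ = ⌈(q * a : K) / p + q⌉₊ := by
        rw [Nat.ceil_add_natCast (by positivity), add_comm]
    _ ≤ ⌈(q * b : K) / p⌉₊ := Nat.ceil_le_ceil hshift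

theorem stmt_6_general {V : Type*} [Fintype V] [DecidableEq V] (G : SimpleGraph V)
    (p q : ℕ) (hp : 0 < p) (S : Finset V)
    (hgood : ∀ K : Finset V, IsMaximalClique G K →
      p + K.card ≤ (K ∩ S).card + G.cliqueNum)
    (hqcol : (G.induce (S : Set V)).Colorable q)
    (hrest : (G.induce ((S : Set V)ᶜ)).Colorable
      ⌈(q * (G.induce ((S : Set V)ᶜ)).cliqueNum : ℚ) / p⌉₊) :
    G.Colorable ⌈(q * G.cliqueNum : ℚ) / p⌉₊ :=
  (colorable_add_of_induce_of_induce_compl hqcol hrest).mono <|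
    Nat.add_ceil_mul_div_le_ceil_mul_div q hp (cliqueNum_induce_compl_add_le hgood)

theorem stmt_6 {V : Type*} [Fintype V] [DecidableEq V] (G : SimpleGraph V)
    (p q : ℕ) (hp : 0 < p) (hq : 0 < q) (S : Finset V)
    (hgood : ∀ K : Finset V, IsMaximalClique G K →
      p + K.card ≤ (K ∩ S).card + G.cliqueNum)
    (hqcol : (G.induce (S : Set V)).Colorable q)
    (hrest : (G.induce ((S : Set V)ᶜ)).Colorable
      ⌈(q * (G.induce ((S : Set V)ᶜ)).cliqueNum : ℚ) / p⌉₊) :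
    G.Colorable ⌈(q * G.cliqueNum : ℚ) / p⌉₊ :=
  stmt_6_general G p q hp S hgood hqcol hrest
end

section
/- Let G be a graph with disjoint vertex sets A_1, ..., A_m (m ≥ 1) such that each G[A_i] is connected, there is an edge between A_i and A_{i+1} for each i < m, and there is no edge between A_i and A_j whenever j > i+1. Then for any vertex u ∈ A_1 and v ∈ A_m, G contains an induced path from u's set to v's set with at least m vertices; in particular G contains an induced path on at least m vertices. -/
/-!
Join the blocks into `S = ⋃ i, A i` and take a shortest walk from `u` to `v` in `G[S]`; it exists
because consecutive connected blocks are linked by an edge. A shortest walk is an induced path.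
Labelling each vertex of `S` by the index of its block, an edge of `G[S]` raises the label by at
most one (there are no edges between non-consecutive blocks), so going from label `0` to label
`m - 1` takes at least `m - 1` steps, i.e. the path has at least `m` vertices.
-/

open SimpleGraph

namespace SimpleGraph

variable {V : Type*} {G : SimpleGraph V} {u v : V}

lemma Walk.le_add_length_of_adj_le_succ {ℓ : V → ℕ} (hℓ : ∀ x y, G.Adj x y → ℓ y ≤ ℓ x + 1)
    (p : G.Walk u v) : ℓ v ≤ ℓ u + p.length := by
  induction p with
  | nil => simp
  | @cons x y z hxy q ih =>
    have := hℓ x y hxy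
    rw [Walk.length_cons]
    omega

namespace Walk

variable {p : G.Walk u v}

lemma sub_le_length_of_length_eq_dist (hp : p.length = G.dist u v) {i j : ℕ} (hj : j ≤ p.length)
    (w : G.Walk (p.getVert i) (p.getVert j)) : j - i ≤ w.length := by
  have hd := G.dist_le (((p.take i).append w).append (p.drop j))
  simp only [length_append, take_length, drop_length] at hd
  omega

lemma getVert_injOn_of_length_eq_dist (hp : p.length = G.dist u v) :
    Set.InjOn p.getVert (Set.Iic p.length) := by
  intro i hi j hj hij
  have hij' := sub_le_length_of_length_eq_dist hp hj (Walk.nil.copy rfl hij)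
  have hji' := sub_le_length_of_length_eq_dist hp hi (Walk.nil.copy rfl hij.symm)
  simp only [length_copy, length_nil] at hij' hji'
  omega

lemma adj_getVert_iff_of_length_eq_dist (hp : p.length = G.dist u v) {i j : ℕ}
    (hi : i ≤ p.length) (hj : j ≤ p.length) :
    G.Adj (p.getVert i) (p.getVert j) ↔ i + 1 = j ∨ j + 1 = i := by
  constructor
  · intro hadj
    have hij := sub_le_length_of_length_eq_dist hp hj hadj.toWalk
    have hji := sub_le_length_of_length_eq_dist hp hi hadj.symm.toWalk
    have hne : i ≠ j := by
      rintro rfl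
      exact G.irrefl hadj
    simp only [length_cons, length_nil] at hij hji
    omega
  · rintro (rfl | rfl)
    · exact p.adj_getVert_succ (by omega)
    · exact (p.adj_getVert_succ (by omega)).symm

/-- A shortest walk is an induced path. -/
def pathGraphEmbedding (p : G.Walk u v) (hp : p.length = G.dist u v) :
    pathGraph (p.length + 1) ↪g G where
  toFun i := p.getVert i
  inj' i j hij := Fin.ext <| getVert_injOn_of_length_eq_dist hp
    (Set.mem_Iic.mpr (Nat.lt_succ_iff.mp i.2)) (Set.mem_Iic.mpr (Nat.lt_succ_iff.mp j.2)) hij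
  map_rel_iff' {i j} := by
    rw [pathGraph_adj]
    exact adj_getVert_iff_of_length_eq_dist hp (by omega) (by omega)

@[simp]
lemma pathGraphEmbedding_apply (hp : p.length = G.dist u v) (i : Fin (p.length + 1)) :
    p.pathGraphEmbedding hp i = p.getVert i :=
  rfl

end Walk

section Chain

variable {m : ℕ} {A : Fin m → Set V}

lemma reachable_induce_iUnion_of_chain (hconn : ∀ i, (G.induce (A i)).Preconnected)
    (hedge : ∀ i : Fin m, (h : (i : ℕ) + 1 < m) → ∃ x ∈ A i, ∃ y ∈ A ⟨(i : ℕ) + 1, h⟩, G.Adj x y)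
    {k : ℕ} (hk : k < m) {x y : V} (hx : x ∈ A ⟨0, by omega⟩) (hy : y ∈ A ⟨k, hk⟩) :
    (G.induce (⋃ i, A i)).Reachable ⟨x, Set.mem_iUnion_of_mem _ hx⟩
      ⟨y, Set.mem_iUnion_of_mem _ hy⟩ := by
  have reachable_in_block (i : Fin m) {a b : V} (ha : a ∈ A i) (hb : b ∈ A i) :
      (G.induce (⋃ i, A i)).Reachable ⟨a, Set.mem_iUnion_of_mem _ ha⟩
        ⟨b, Set.mem_iUnion_of_mem _ hb⟩ :=
    (hconn i ⟨a, ha⟩ ⟨b, hb⟩).map (induceHomOfLE G (Set.subset_iUnion A i)).toHom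
  induction k generalizing y with
  | zero => exact reachable_in_block _ hx hy
  | succ k ih =>
    obtain ⟨a, ha, b, hb, hab⟩ := hedge ⟨k, by omega⟩ hk
    have hab' : (G.induce (⋃ i, A i)).Adj ⟨a, Set.mem_iUnion_of_mem _ ha⟩
        ⟨b, Set.mem_iUnion_of_mem _ hb⟩ := hab
    exact ((ih (by omega) hx ha).trans hab'.reachable).trans (reachable_in_block _ hb hy)

lemma le_add_length_of_walk_induce_iUnion
    (hdisj : ∀ i j : Fin m, i ≠ j → Disjoint (A i) (A j))
    (hnon : ∀ i j : Fin m, (i : ℕ) + 1 < (j : ℕ) → ∀ x ∈ A i, ∀ y ∈ A j, ¬ G.Adj x y)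
    {i j : Fin m} {x y : ⋃ i, A i} (hx : (x : V) ∈ A i) (hy : (y : V) ∈ A j)
    (p : (G.induce (⋃ i, A i)).Walk x y) : (j : ℕ) ≤ i + p.length := by
  choose block hblock using fun z : ⋃ i, A i => Set.mem_iUnion.mp z.2
  have block_eq {z : ⋃ i, A i} {l : Fin m} (hz : (z : V) ∈ A l) : block z = l := by
    by_contra hne
    exact Set.disjoint_left.mp (hdisj _ _ hne) (hblock z) hz
  have hstep (a b : ⋃ i, A i) (hab : (G.induce (⋃ i, A i)).Adj a b) :
      ((block b : Fin m) : ℕ) ≤ block a + 1 := by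
    by_contra! hgt
    exact hnon _ _ hgt _ (hblock a) _ (hblock b) hab
  have := p.le_add_length_of_adj_le_succ (ℓ := fun z => (block z : ℕ)) hstep
  rwa [block_eq hx, block_eq hy] at this

end Chain

end SimpleGraph

theorem stmt_8 {V : Type*} (G : SimpleGraph V) (m : ℕ) (hm : 1 ≤ m)
    (A : Fin m → Set V)
    (hdisj : ∀ i j : Fin m, i ≠ j → Disjoint (A i) (A j))
    (hconn : ∀ i : Fin m, (G.induce (A i)).Connected)
    (hedge : ∀ i : Fin m, (h : (i : ℕ) + 1 < m) →
      ∃ x ∈ A i, ∃ y ∈ A ⟨(i : ℕ) + 1, h⟩, G.Adj x y)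
    (hnon : ∀ i j : Fin m, (i : ℕ) + 1 < (j : ℕ) →
      ∀ x ∈ A i, ∀ y ∈ A j, ¬ G.Adj x y)
    (u v : V) (hu : u ∈ A ⟨0, by omega⟩) (hv : v ∈ A ⟨m - 1, by omega⟩) :
    ∃ n : ℕ, ∃ hn : m ≤ n, ∃ f : pathGraph n ↪g G,
      f ⟨0, by omega⟩ = u ∧ f ⟨n - 1, by omega⟩ = v := by
  obtain ⟨p, hp⟩ := (reachable_induce_iUnion_of_chain (fun i => (hconn i).preconnected) hedge
    (by omega) hu hv).exists_walk_length_eq_dist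
  have hlen := le_add_length_of_walk_induce_iUnion hdisj hnon hu hv p
  refine ⟨p.length + 1, by simp only at hlen; omega,
    (Embedding.induce _).comp (p.pathGraphEmbedding hp), by simp, by simp⟩
end

section
/- Let G be a graph with disjoint vertex sets A_1, ..., A_m (m ≥ 3) forming an induced cyclic sequence: each G[A_i] is connected, there is an edge between A_i and A_{i+1 mod m} for each i, and no edge between A_i and A_j when |i − j| is not congruent to 0 or 1 mod m. Then G contains an induced cycle with at least m vertices. -/
/-!
Tag each vertex with the index of its part and consider closed walks that run through
`A 0, A 1, …, A (m - 1)` in this order, each part along a path. Such a walk exists since the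
parts are connected and consecutive parts are joined by an edge, and it has at least `m`
vertices. Take one of minimal length. A chord inside a part or between consecutive parts
could be used to cut out the stretch it spans, and a chord between `A (m - 1)` and `A 0`
could be used to keep only the stretch it spans; either way the walk would get shorter.
Since no other pairs of parts are adjacent, the minimal walk is an induced cycle.
-/

open SimpleGraph Function

namespace List

variable {α : Type*} {R : α → α → Prop} {l : List α} {p q : ℕ}

lemma take_append_drop_sublist (hpq : p ≤ q) : (l.take p ++ l.drop q).Sublist l := by
  have := (take_sublist_take_left (l := l) hpq).append (Sublist.refl (l.drop q))
  rwa [take_append_drop] at this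

lemma getLast?_take_succ (hp : p < l.length) : (l.take (p + 1)).getLast? = some l[p] := by
  simp [getLast?_take, hp]

lemma IsChain.take_succ_append_drop (hl : l.IsChain R) (hq : q < l.length)
    (hpq : p < q) (h : R l[p] l[q]) : (l.take (p + 1) ++ l.drop q).IsChain R :=
  isChain_append.mpr ⟨hl.take _, hl.drop _,
    by simp [getLast?_take_succ (hpq.trans hq), head?_drop, getElem?_eq_getElem hq, h]⟩

end List

lemma Fin.val_eq_zero_and_val_add_one_eq_of_add_one {m : ℕ} [NeZero m] {i j : Fin m}
    (h : j = i + 1 ∨ i = j + 1) (hgap : i.val + 1 < j.val) : i.val = 0 ∧ j.val + 1 = m := by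
  obtain ⟨k, rfl⟩ := Nat.exists_eq_add_one_of_ne_zero (NeZero.ne m)
  rcases h with rfl | rfl <;> rw [Fin.val_add_one] at * <;> split_ifs at * with hlast
  all_goals simp only [Fin.ext_iff, Fin.val_last] at hlast; omega

namespace SimpleGraph

variable {V : Type*} {G : SimpleGraph V}

lemma cycleGraph_adj_iff_of_lt {n : ℕ} {u v : Fin n} (huv : u < v) :
    (cycleGraph n).Adj u v ↔ v.val = u.val + 1 ∨ u.val = 0 ∧ v.val + 1 = n := by
  rw [cycleGraph_adj', Fin.coe_sub_iff_lt.mpr huv, Fin.sub_val_of_le huv.le]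
  have := Fin.lt_def.mp huv
  omega

theorem exists_cycleGraph_embedding_of_chordless {L : List V} (hnd : L.Nodup)
    (hchain : L.IsChain G.Adj) (hclose : ∀ a ∈ L.getLast?, ∀ b ∈ L.head?, G.Adj a b)
    (hchord : ∀ p q (_ : p < q) (_ : q < L.length), G.Adj L[p] L[q] →
      q = p + 1 ∨ p = 0 ∧ q + 1 = L.length) :
    Nonempty (cycleGraph L.length ↪g G) := by
  have key (u v : Fin L.length) (huv : u < v) :
      G.Adj L[u] L[v] ↔ (cycleGraph L.length).Adj u v := by
    rw [cycleGraph_adj_iff_of_lt huv]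
    refine ⟨hchord u v huv v.isLt, ?_⟩
    rintro (h | ⟨hu, hv⟩)
    · simpa [h] using hchain.getElem u (by omega)
    · refine (hclose _ ?_ _ ?_).symm
      · simp [List.getLast?_eq_getElem?, ← hv]
      · simp [List.head?_eq_getElem?, ← hu]
  refine ⟨⟨⟨L.get, List.nodup_iff_injective_get.mp hnd⟩, fun {u v} => ?_⟩⟩
  rcases lt_trichotomy u v with h | rfl | h
  · exact key u v h
  · simp
  · rw [G.adj_comm, (cycleGraph _).adj_comm]
    exact key v u h

lemma exists_list_path_of_induce_connected {s : Set V} (h : (G.induce s).Connected) {a b : V}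
    (ha : a ∈ s) (hb : b ∈ s) :
    ∃ l : List V, l.IsChain G.Adj ∧ l.Nodup ∧ (∀ v ∈ l, v ∈ s) ∧
      l.head? = some a ∧ l.getLast? = some b := by
  classical
  obtain ⟨w⟩ := h.preconnected ⟨a, ha⟩ ⟨b, hb⟩
  let P := w.toPath
  refine ⟨P.1.support.map Subtype.val, (List.isChain_map _).mpr P.1.isChain_adj_support,
    P.2.support_nodup.map Subtype.val_injective, by simp +contextual, ?_, ?_⟩
  · rw [List.head?_map, ← P.1.cons_tail_support]
    rfl
  · rw [List.getLast?_map, List.getLast?_eq_some_getLast P.1.support_ne_nil,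
      Walk.getLast_support]
    rfl

variable (G) {m : ℕ} (A : Fin m → Set V)

def RouteStep (x y : Fin m × V) : Prop :=
  G.Adj x.2 y.2 ∧ x.1 ≤ y.1 ∧ y.1.val ≤ x.1.val + 1

/-- A closed walk through `A 0, A 1, …, A (m - 1)` in this order, listed from a vertex of `A 0`
to a vertex of `A (m - 1)`, each vertex tagged with the index of its part. -/
structure IsRoute (C : List (Fin m × V)) : Prop where
  ne_nil : C ≠ []
  mem : ∀ x ∈ C, x.2 ∈ A x.1
  nodup : C.Nodup
  chain : C.IsChain G.RouteStep
  head : ∀ x ∈ C.head?, x.1.val = 0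
  last : ∀ x ∈ C.getLast?, x.1.val + 1 = m
  closing : ∀ x ∈ C.getLast?, ∀ y ∈ C.head?, G.Adj x.2 y.2

variable {G A}

namespace IsRoute

variable {C : List (Fin m × V)} {p q : ℕ}

lemma fst_le (hC : G.IsRoute A C) (hpq : p ≤ q) (hq : q < C.length) : C[p].1 ≤ C[q].1 := by
  induction q, hpq using Nat.le_induction with
  | base => rfl
  | succ q _ ih => exact (ih (by omega)).trans (hC.chain.getElem q hq).2.1

lemma fst_val_le (hC : G.IsRoute A C) (hp : p < C.length) : C[p].1.val ≤ p := by
  induction p with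
  | zero => simpa [List.head?_eq_getElem?, C.length_pos_iff.mpr hC.ne_nil] using hC.head C[0]
  | succ p ih =>
    have := (hC.chain.getElem p hp).2.2
    have := ih (by omega)
    omega

lemma le_length (hC : G.IsRoute A C) : m ≤ C.length := by
  have hn := C.length_pos_iff.mpr hC.ne_nil
  have := hC.fst_val_le (p := C.length - 1) (by omega)
  have := hC.last C[C.length - 1] (by simp [List.getLast?_eq_getElem?])
  omega

lemma nodup_map_snd (hC : G.IsRoute A C) (hdisj : Pairwise (Disjoint on A)) :
    (C.map Prod.snd).Nodup := by
  refine hC.nodup.map_on fun x hx y hy hxy => Prod.ext ?_ hxy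
  by_contra hne
  exact (hdisj hne).ne_of_mem (hC.mem x hx) (hC.mem y hy) hxy

lemma shortcut (hC : G.IsRoute A C) (hq : q < C.length) (hpq : p < q)
    (hadj : G.Adj C[p].2 C[q].2) (hfst : C[q].1.val ≤ C[p].1.val + 1) :
    G.IsRoute A (C.take (p + 1) ++ C.drop q) := by
  have hsub := C.take_append_drop_sublist (show p + 1 ≤ q by omega)
  have hhead : (C.take (p + 1) ++ C.drop q).head? = C.head? := by
    rw [List.head?_append_of_ne_nil _ (by simp [hC.ne_nil]), List.head?_take, if_neg (by omega)]
  have hlast : (C.take (p + 1) ++ C.drop q).getLast? = C.getLast? := by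
    rw [List.getLast?_append_of_ne_nil _ (by simpa using hq), List.getLast?_drop,
      if_neg (by omega)]
  refine ⟨by simp [hC.ne_nil], fun x hx => hC.mem x (hsub.subset hx), hC.nodup.sublist hsub,
    hC.chain.take_succ_append_drop hq hpq ⟨hadj, hC.fst_le hpq.le hq, hfst⟩, ?_, ?_, ?_⟩
  · rw [hhead]; exact hC.head
  · rw [hlast]; exact hC.last
  · rw [hhead, hlast]; exact hC.closing

lemma segment (hC : G.IsRoute A C) (hq : q < C.length) (hpq : p < q)
    (hadj : G.Adj C[p].2 C[q].2) (hp0 : C[p].1.val = 0) (hqm : C[q].1.val + 1 = m) :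
    G.IsRoute A ((C.drop p).take (q - p + 1)) := by
  have hsub : ((C.drop p).take (q - p + 1)).Sublist C :=
    (List.take_sublist _ _).trans (List.drop_sublist _ _)
  have hhead : ((C.drop p).take (q - p + 1)).head? = some C[p] := by
    simp [List.head?_take, List.head?_drop]
  have hlast : ((C.drop p).take (q - p + 1)).getLast? = some C[q] := by
    rw [List.getLast?_take_succ (by simp; omega)]
    simp [show p + (q - p) = q by omega]
  refine ⟨?_, fun x hx => hC.mem x (hsub.subset hx), hC.nodup.sublist hsub,
    (hC.chain.drop p).take _, ?_, ?_, ?_⟩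
  · simp; omega
  · simpa [hhead] using hp0
  · simpa [hlast] using hqm
  · simpa [hhead, hlast] using hadj.symm

lemma eq_add_one_or_wrap_of_adj [NeZero m] (hC : G.IsRoute A C)
    (hmin : ∀ C', G.IsRoute A C' → C.length ≤ C'.length)
    (hnon : ∀ i j, j ≠ i → j ≠ i + 1 → i ≠ j + 1 → ∀ x ∈ A i, ∀ y ∈ A j, ¬ G.Adj x y)
    (hq : q < C.length) (hpq : p < q) (hadj : G.Adj C[p].2 C[q].2) :
    q = p + 1 ∨ p = 0 ∧ q + 1 = C.length := by
  by_cases hfst : C[q].1.val ≤ C[p].1.val + 1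
  · have := hmin _ (hC.shortcut hq hpq hadj hfst)
    simp only [List.length_append, List.length_take, List.length_drop] at this
    omega
  · have hcyc : C[q].1 = C[p].1 + 1 ∨ C[p].1 = C[q].1 + 1 := by
      by_contra! h
      exact hnon _ _ (fun he => hfst (by simp [he])) h.1 h.2 _ (hC.mem _ (by simp))
        _ (hC.mem _ (by simp)) hadj
    obtain ⟨hp0, hqm⟩ := Fin.val_eq_zero_and_val_add_one_eq_of_add_one hcyc (by omega)
    have := hmin _ (hC.segment hq hpq hadj hp0 hqm)
    simp only [List.length_take, List.length_drop] at this
    omega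

end IsRoute

lemma exists_tagged_path {i : Fin m} (hconn : (G.induce (A i)).Connected) {a b : V}
    (ha : a ∈ A i) (hb : b ∈ A i) :
    ∃ l : List (Fin m × V), (∀ z ∈ l, z.1 = i ∧ z.2 ∈ A i) ∧ l.Nodup ∧
      l.IsChain G.RouteStep ∧ l.head? = some (i, a) ∧ l.getLast? = some (i, b) := by
  obtain ⟨l, hchain, hnd, hmem, hhead, hlast⟩ := exists_list_path_of_induce_connected hconn ha hb
  refine ⟨l.map (i, ·), by simpa using hmem, hnd.map (Prod.mk_right_injective i),
    (List.isChain_map _).mpr (hchain.imp fun _ _ h => ⟨h, le_rfl, by simp⟩), ?_, ?_⟩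
  · simp [hhead]
  · simp [hlast]

lemma exists_route_prefix {k : ℕ} {A : Fin (k + 1) → Set V}
    (hconn : ∀ i, (G.induce (A i)).Connected) {x y : Fin (k + 1) → V}
    (hx : ∀ i, x i ∈ A i) (hy : ∀ i, y i ∈ A (i + 1)) (hxy : ∀ i, G.Adj (x i) (y i))
    (i : Fin (k + 1)) :
    ∃ C : List (Fin (k + 1) × V), (∀ z ∈ C, z.2 ∈ A z.1 ∧ z.1 ≤ i) ∧ C.Nodup ∧
      C.IsChain G.RouteStep ∧ C.head? = some (0, y (Fin.last k)) ∧
      C.getLast? = some (i, x i) := by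
  induction i using Fin.induction with
  | zero =>
    obtain ⟨l, hmem, hnd, hchain, hhead, hlast⟩ :=
      exists_tagged_path (hconn 0) (Fin.last_add_one k ▸ hy (Fin.last k)) (hx 0)
    exact ⟨l, fun z hz => by simp [(hmem z hz).1, (hmem z hz).2], hnd, hchain, hhead, hlast⟩
  | succ i ih =>
    obtain ⟨C, hCmem, hCnd, hCchain, hChead, hClast⟩ := ih
    obtain ⟨l, hmem, hnd, hchain, hhead, hlast⟩ :=
      exists_tagged_path (hconn i.succ) (Fin.coeSucc_eq_succ ▸ hy i.castSucc) (hx i.succ)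
    refine ⟨C ++ l, ?_, ?_, ?_, by simp [List.head?_append, hChead],
      by simp [List.getLast?_append, hlast]⟩
    · simp only [List.mem_append]
      rintro z (hz | hz)
      · exact ⟨(hCmem z hz).1, (hCmem z hz).2.trans Fin.castSucc_lt_succ.le⟩
      · rw [(hmem z hz).1]
        exact ⟨(hmem z hz).2, le_rfl⟩
    · refine List.nodup_append.mpr ⟨hCnd, hnd, fun a ha b hb hab => ?_⟩
      have := (hCmem a ha).2
      rw [hab, (hmem b hb).1] at this
      exact Fin.castSucc_lt_succ.not_ge this
    · refine List.isChain_append.mpr ⟨hCchain, hchain, ?_⟩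
      simp [hClast, hhead, RouteStep, hxy, Fin.castSucc_lt_succ.le]

lemma exists_isRoute [NeZero m] (hconn : ∀ i, (G.induce (A i)).Connected)
    (hedge : ∀ i, ∃ x ∈ A i, ∃ y ∈ A (i + 1), G.Adj x y) : ∃ C, G.IsRoute A C := by
  obtain ⟨k, rfl⟩ := Nat.exists_eq_add_one_of_ne_zero (NeZero.ne m)
  choose x hx y hy hxy using hedge
  obtain ⟨C, hmem, hnd, hchain, hhead, hlast⟩ :=
    exists_route_prefix hconn hx hy hxy (Fin.last k)
  refine ⟨C, ?_, fun z hz => (hmem z hz).1, hnd, hchain, ?_, ?_, ?_⟩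
  · rintro rfl
    simp at hhead
  · simp [hhead]
  · simp [hlast]
  · simpa [hhead, hlast] using hxy (Fin.last k)

theorem exists_cycleGraph_embedding_of_cyclic_sequence [NeZero m]
    (hdisj : Pairwise (Disjoint on A)) (hconn : ∀ i, (G.induce (A i)).Connected)
    (hedge : ∀ i, ∃ x ∈ A i, ∃ y ∈ A (i + 1), G.Adj x y)
    (hnon : ∀ i j, j ≠ i → j ≠ i + 1 → i ≠ j + 1 → ∀ x ∈ A i, ∀ y ∈ A j, ¬ G.Adj x y) :
    ∃ n, m ≤ n ∧ Nonempty (cycleGraph n ↪g G) := by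
  obtain ⟨C, hC, hmin⟩ := (measure List.length).wf.has_min {C | G.IsRoute A C}
    (exists_isRoute hconn hedge)
  replace hmin : ∀ C', G.IsRoute A C' → C.length ≤ C'.length :=
    fun C' hC' => not_lt.mp (hmin C' hC')
  refine ⟨C.length, hC.le_length, ?_⟩
  rw [← C.length_map Prod.snd]
  refine exists_cycleGraph_embedding_of_chordless (hC.nodup_map_snd hdisj)
    ((List.isChain_map _).mpr (hC.chain.imp fun _ _ h => h.1)) ?_
    (by simpa using fun p q hpq hq => hC.eq_add_one_or_wrap_of_adj hmin hnon hq hpq)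
  simp only [List.getLast?_map, List.head?_map, Option.mem_def, Option.map_eq_some_iff]
  rintro _ ⟨x, hx, rfl⟩ _ ⟨y, hy, rfl⟩
  exact hC.closing x hx y hy

end SimpleGraph

theorem stmt_9 {V : Type*} (G : SimpleGraph V) (m : ℕ) (hm : 3 ≤ m)
    (A : Fin m → Set V)
    (hdisj : ∀ i j : Fin m, i ≠ j → Disjoint (A i) (A j))
    (hconn : ∀ i : Fin m, (G.induce (A i)).Connected)
    (hedge : ∀ i : Fin m, ∃ x ∈ A i, ∃ y ∈ A (i + ⟨1, by omega⟩), G.Adj x y)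
    (hnon : ∀ i j : Fin m, j ≠ i → j ≠ i + ⟨1, by omega⟩ → i ≠ j + ⟨1, by omega⟩ →
      ∀ x ∈ A i, ∀ y ∈ A j, ¬ G.Adj x y) :
    ∃ n : ℕ, m ≤ n ∧ Nonempty (cycleGraph n ↪g G) := by
  have : NeZero m := ⟨by omega⟩
  have hone : (⟨1, by omega⟩ : Fin m) = 1 := Fin.ext (Nat.mod_eq_of_lt (by omega)).symm
  rw [hone] at hedge hnon
  exact exists_cycleGraph_embedding_of_cyclic_sequence hdisj hconn hedge hnon
end

section
/- Let G be a graph with no induced C_4 and no induced C_6, and let u be a vertex of G with disjoint sets X, Y ⊆ V(G) \ {u} such that: u is complete to X and anticomplete to Y; any two non-adjacent vertices of X have non-empty neighborhoods in Y which are complete to each other; and there is no induced P_5 = a-b-c-d-e with a,b,c,d ∈ X and e ∈ Y. Then G[X] is P_4-free. -/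
open SimpleGraph

theorem stmt_11 {V : Type*} [Fintype V] (G : SimpleGraph V)
    (hC4 : C4Free G) (hC6 : IsEmpty (cycleGraph 6 ↪g G))
    (u : V) (X Y : Set V) (hXY : Disjoint X Y) (huX : u ∉ X) (huY : u ∉ Y)
    (hcomp : ∀ x ∈ X, G.Adj u x)
    (hanti : ∀ y ∈ Y, ¬ G.Adj u y)
    (hnbhd : ∀ x ∈ X, ∀ x' ∈ X, x ≠ x' → ¬ G.Adj x x' →
      (Y ∩ G.neighborSet x).Nonempty ∧ (Y ∩ G.neighborSet x').Nonempty ∧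
      ∀ a ∈ Y ∩ G.neighborSet x, ∀ b ∈ Y ∩ G.neighborSet x', a ≠ b → G.Adj a b)
    (hP5 : ∀ a b c d e : V, a ∈ X → b ∈ X → c ∈ X → d ∈ X → e ∈ Y →
      G.Adj a b → G.Adj b c → G.Adj c d → G.Adj d e →
      ¬ G.Adj a c → ¬ G.Adj a d → ¬ G.Adj a e →
      ¬ G.Adj b d → ¬ G.Adj b e → ¬ G.Adj c e →
      a ≠ c → a ≠ d → a ≠ e → b ≠ d → b ≠ e → c ≠ e → False) :
    -- `G[X]` is `P₄`-free
    ∀ a b c d : V, a ∈ X → b ∈ X → c ∈ X → d ∈ X →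
      G.Adj a b → G.Adj b c → G.Adj c d →
      ¬ G.Adj a c → ¬ G.Adj a d → ¬ G.Adj b d →
      a ≠ c → a ≠ d → b ≠ d → False := by
  intro a b c d haX hbX hcX hdX hab hbc hcd hac had hbd hnac hnad hnbd
  have hXYne : ∀ x ∈ X, ∀ w ∈ Y, x ≠ w := fun x hx w hw h =>
    Set.disjoint_left.mp hXY hx (h ▸ hw)
  have huYne : ∀ w ∈ Y, u ≠ w := fun w hw h => huY (h ▸ hw)
  obtain ⟨⟨z, hzY, hza⟩, ⟨y, hyY, hyd⟩, hcompl⟩ := hnbhd a haX d hdX hnad had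
  -- hza : G.Adj a z ; hyd : G.Adj d y  (neighborSet membership)
  have hza : G.Adj a z := hza
  have hyd : G.Adj d y := hyd
  -- y is not adjacent to a
  have hnay : ¬ G.Adj a y := fun h => by
    rcases hC4 u a y d (huYne y hyY) hnad (hcomp a haX) h hyd.symm
      (hcomp d hdX).symm with h' | h'
    · exact hanti y hyY h'
    · exact had h'
  have hnby : ¬ G.Adj b y := fun h => by
    rcases hC4 u b y d (huYne y hyY) hnbd (hcomp b hbX) h hyd.symm
      (hcomp d hdX).symm with h' | h'
    · exact hanti y hyY h'
    · exact hbd h'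
  have hcy : G.Adj c y := by
    by_contra hncy
    exact hP5 a b c d y haX hbX hcX hdX hyY hab hbc hcd hyd hac had hnay hbd hnby hncy
      hnac hnad (hXYne a haX y hyY) hnbd (hXYne b hbX y hyY) (hXYne c hcX y hyY)
  -- z is not adjacent to d or c
  have hndz : ¬ G.Adj d z := fun h => by
    rcases hC4 u d z a (huYne z hzY) (Ne.symm hnad) (hcomp d hdX) h hza.symm
      (hcomp a haX).symm with h' | h'
    · exact hanti z hzY h'
    · exact had h'.symm
  have hncz : ¬ G.Adj c z := fun h => by
    rcases hC4 u c z a (huYne z hzY) (Ne.symm hnac) (hcomp c hcX) h hza.symm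
      (hcomp a haX).symm with h' | h'
    · exact hanti z hzY h'
    · exact hac h'.symm
  have hbz : G.Adj b z := by
    by_contra hnbz
    exact hP5 d c b a z hdX hcX hbX haX hzY hcd.symm hbc.symm hab.symm hza
      (fun h => hbd h.symm) (fun h => had h.symm) hndz (fun h => hac h.symm) hncz hnbz
      (Ne.symm hnbd) (Ne.symm hnad) (hXYne d hdX z hzY) (Ne.symm hnac)
      (hXYne c hcX z hzY) (hXYne b hbX z hzY)
  have hzy : G.Adj z y :=
    hcompl z ⟨hzY, hza⟩ y ⟨hyY, hyd⟩ (fun h => hnay (h ▸ hza))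
  rcases hC4 z b c y (Ne.symm (hXYne c hcX z hzY)) (hXYne b hbX y hyY) hbz.symm hbc hcy hzy.symm with h' | h'
  · exact hncz h'.symm
  · exact hnby h'
end

section
/- Every k-hyperhole H (a blowup of the cycle C_k, k ≥ 4, with all blowup cliques non-empty) satisfies χ(H) = max(ω(H), ⌈|V(H)|/α(H)⌉), where α(H) is the independence number. -/
/-
Every graph satisfies `ω ≤ χ` and `|V| ≤ χ α` (colour classes are independent). Conversely let `t`
be the right-hand side. Two consecutive blocks form a clique, so `|B i| + |B (i + 1)| ≤ t`; an
independent set meets pairwise non-consecutive blocks, at most one vertex each, so `α ≤ ⌊k/2⌋` and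
`|V| ≤ ⌊k/2⌋ t`. Give block `i` the `|B i|` consecutive residues of `ℤ/t` starting at `s i`, where
`s (i + 1) = s i + δ i` with `|B i| ≤ δ i ≤ t - |B (i + 1)|`. Consecutive arcs are then disjoint,
and the offsets can be chosen with sum `⌊k/2⌋ t ≡ 0`, because
`∑ |B i| ≤ ⌊k/2⌋ t ≤ k t - |V| = ∑ (t - |B (i + 1)|)`; this makes the arcs close up around the cycle.
-/

open SimpleGraph

/-- The independence number of `G`: the clique number of the complement. -/
noncomputable def indepNum {V : Type*} (G : SimpleGraph V) : ℕ := Gᶜ.cliqueNum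

open Finset

theorem Finset.exists_le_le_sum_eq {ι : Type*} [DecidableEq ι] (s : Finset ι) (L U : ι → ℕ)
    (T : ℕ) (hLU : ∀ i ∈ s, L i ≤ U i) (hL : ∑ i ∈ s, L i ≤ T) (hU : T ≤ ∑ i ∈ s, U i) :
    ∃ δ : ι → ℕ, (∀ i ∈ s, L i ≤ δ i ∧ δ i ≤ U i) ∧ ∑ i ∈ s, δ i = T := by
  induction s using Finset.induction generalizing T with
  | empty => exact ⟨L, by simp, by simpa using le_antisymm hL hU⟩
  | @insert a s ha ih =>
    rw [sum_insert ha] at hL hU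
    have hLU' : ∀ i ∈ s, L i ≤ U i := fun i hi => hLU i (mem_insert_of_mem hi)
    have hLUa := hLU a (mem_insert_self a s)
    have hsum := sum_le_sum hLU'
    -- the least value for `a` that leaves a target the other terms can still reach
    set da := max (L a) (T - ∑ i ∈ s, U i)
    obtain ⟨δ, hδ, hδsum⟩ := ih (T - da) hLU' (by omega) (by omega)
    refine ⟨Function.update δ a da, fun i hi => ?_, ?_⟩
    · rcases mem_insert.mp hi with rfl | hi
      · simp only [Function.update_self]; omega
      · rw [Function.update_of_ne (ne_of_mem_of_not_mem hi ha)]; exact hδ i hi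
    · rw [sum_insert ha, Function.update_self, sum_update_of_notMem ha, hδsum]; omega

theorem Fin.exists_apply_add_one_eq_add_of_sum_eq_zero {M : Type*} [AddCommGroup M] {k : ℕ}
    [NeZero k] (δ : Fin k → M) (hδ : ∑ i, δ i = 0) :
    ∃ s : Fin k → M, ∀ i, s (i + 1) = s i + δ i := by
  obtain ⟨n, rfl⟩ := Nat.exists_eq_succ_of_ne_zero (NeZero.ne k)
  refine ⟨fun i => Fin.partialSum δ i.castSucc, fun i => ?_⟩
  rcases Fin.eq_castSucc_or_eq_last i with ⟨j, rfl⟩ | rfl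
  · dsimp only
    rw [Fin.coeSucc_eq_succ, ← Fin.succ_castSucc, Fin.partialSum_succ]
  · dsimp only
    rw [Fin.last_add_one, Fin.castSucc_zero, Fin.partialSum_zero, ← Fin.partialSum_succ,
      Fin.succ_last, ← hδ, Fin.partialSum, Fin.val_last, List.take_of_length_le (by simp),
      List.sum_ofFn]

section CyclicArc

variable {t : ℕ}

def cyclicArc (s : ZMod t) (m : ℕ) : Finset (ZMod t) :=
  (range m).image fun j : ℕ => s + j

theorem card_cyclicArc (s : ZMod t) {m : ℕ} (hm : m ≤ t) : #(cyclicArc s m) = m := by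
  rw [cyclicArc, card_image_of_injOn, card_range]
  intro j hj j' hj' h
  simp only [coe_range, Set.mem_Iio] at hj hj'
  exact CharP.natCast_injOn_Iio (ZMod t) t (by simp; omega) (by simp; omega) (add_left_cancel h)

theorem disjoint_cyclicArc_add (s : ZMod t) {m d l : ℕ} (hmd : m ≤ d) (hdl : d + l ≤ t) :
    Disjoint (cyclicArc s m) (cyclicArc (s + d) l) := by
  simp only [cyclicArc, Finset.disjoint_left, mem_image, mem_range, not_exists, not_and]
  rintro _ ⟨j, hj, rfl⟩ j' hj' h
  rw [add_assoc, add_left_cancel_iff, ← Nat.cast_add] at h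
  have := CharP.natCast_injOn_Iio (ZMod t) t (by simp; omega) (by simp; omega) h
  omega

theorem exists_card_eq_and_disjoint_add_one {k : ℕ} [NeZero k] (w : Fin k → ℕ)
    (hpair : ∀ i, w i + w (i + 1) ≤ t) (htot : ∑ i, w i ≤ k / 2 * t) :
    ∃ A : Fin k → Finset (ZMod t), (∀ i, #(A i) = w i) ∧ ∀ i, Disjoint (A i) (A (i + 1)) := by
  have hshift : ∑ i, w (i + 1) = ∑ i, w i := Equiv.sum_comp (Equiv.addRight 1) w
  have hgaps : ∑ i, (t - w (i + 1)) + ∑ i, w i = k * t := by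
    rw [← hshift, ← sum_add_distrib, sum_congr rfl fun i _ => Nat.sub_add_cancel
      ((Nat.le_add_left _ _).trans (hpair i)), sum_const, card_univ, Fintype.card_fin, smul_eq_mul]
  have hhalf : k / 2 * t * 2 ≤ k * t := by
    rw [mul_right_comm]; exact Nat.mul_le_mul_right t (Nat.div_mul_le_self k 2)
  obtain ⟨δ, hδ, hδsum⟩ := exists_le_le_sum_eq univ w (fun i => t - w (i + 1)) (k / 2 * t)
    (fun i _ => by have := hpair i; omega) htot (by omega)
  obtain ⟨s, hs⟩ := Fin.exists_apply_add_one_eq_add_of_sum_eq_zero (fun i => (δ i : ZMod t))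
    (by rw [← Nat.cast_sum, hδsum, Nat.cast_mul, ZMod.natCast_self, mul_zero])
  refine ⟨fun i => cyclicArc (s i) (w i), fun i => card_cyclicArc _ ?_, fun i => ?_⟩
  · exact (Nat.le_add_right _ _).trans (hpair i)
  · obtain ⟨hwδ, hδt⟩ := hδ i (mem_univ i)
    simpa only [hs i] using disjoint_cyclicArc_add (s i) hwδ (by have := hpair i; omega)

end CyclicArc

theorem Fin.two_mul_card_le_of_add_one_notMem {k : ℕ} [NeZero k] {I : Finset (Fin k)}
    (hI : ∀ i ∈ I, i + 1 ∉ I) : 2 * #I ≤ k := by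
  have hdisj : Disjoint (I.map (addRightEmbedding 1)) I := by
    simpa [Finset.disjoint_left] using hI
  calc 2 * #I = #(I.map (addRightEmbedding 1) ∪ I) := by
        rw [card_union_of_disjoint hdisj, card_map, two_mul]
    _ ≤ k := (card_le_univ _).trans_eq (Fintype.card_fin k)

theorem Fin.add_one_ne_self {k : ℕ} [NeZero k] (hk : 2 ≤ k) (i : Fin k) : i + 1 ≠ i := by
  rw [Ne, add_eq_left, Fin.ext_iff, Fin.val_one', Fin.val_zero, Nat.mod_eq_of_lt hk]
  exact one_ne_zero

theorem exists_mapsTo_injOn_fibers {V ι α : Type*} [Fintype V] [DecidableEq ι] (b : V → ι)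
    (A : ι → Finset α) (hA : ∀ i, #{v | b v = i} ≤ #(A i)) :
    ∃ f : V → α, ∀ i, Set.MapsTo f {v | b v = i} (A i) ∧ Set.InjOn f {v | b v = i} := by
  let g i : {v // b v = i} ↪ A i :=
    (Function.Embedding.nonempty_of_card_le (by simpa [Fintype.card_subtype] using hA i)).some
  have hg : ∀ v i (h : b v = i), (g (b v) ⟨v, rfl⟩ : α) = g i ⟨v, h⟩ := by rintro v _ rfl; rfl
  refine ⟨fun v => g (b v) ⟨v, rfl⟩, fun i => ⟨fun v hv => ?_, fun x hx y hy hxy => ?_⟩⟩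
  · simpa only [hg v i hv, Finset.mem_coe] using (g i ⟨v, hv⟩).2
  · simp only [hg x i hx, hg y i hy, Subtype.coe_inj, (g i).apply_eq_iff_eq] at hxy
    exact congrArg Subtype.val hxy

namespace SimpleGraph

variable {V : Type*} {G : SimpleGraph V}

theorem Colorable.card_le_mul_indepNum [Fintype V] {m : ℕ} (h : G.Colorable m) :
    Fintype.card V ≤ m * G.indepNum := by
  classical
  obtain ⟨C⟩ := h
  calc Fintype.card V = ∑ c, #{v | C v = c} :=
        card_eq_sum_card_fiberwise fun v _ => mem_univ (C v)
    _ ≤ ∑ _c : Fin m, G.indepNum := sum_le_sum fun c _ =>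
        IsIndepSet.card_le_indepNum (by simpa [Coloring.colorClass] using C.isIndepSet_colorClass c)
    _ = m * G.indepNum := by simp

theorem Colorable.ceil_card_div_indepNum_le [Fintype V] {m : ℕ} (h : G.Colorable m) :
    ⌈(Fintype.card V : ℚ) / G.indepNum⌉₊ ≤ m :=
  Nat.ceil_le.2 <| div_le_of_le_mul₀ (by positivity) (by positivity) <| by
    exact_mod_cast h.card_le_mul_indepNum

theorem indepNum_pos [Finite V] [Nonempty V] : 0 < G.indepNum :=
  IsIndepSet.card_le_indepNum (t := {Classical.arbitrary V}) (by simp [IsIndepSet])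

theorem card_le_ceil_card_div_indepNum_mul [Fintype V] :
    Fintype.card V ≤ ⌈(Fintype.card V : ℚ) / G.indepNum⌉₊ * G.indepNum := by
  cases isEmpty_or_nonempty V
  · simp
  have hα : (0 : ℚ) < G.indepNum := by exact_mod_cast G.indepNum_pos
  exact_mod_cast (div_le_iff₀ hα).1 (Nat.le_ceil ((Fintype.card V : ℚ) / G.indepNum))

theorem chromaticNumber_eq_max_of_colorable [Fintype V]
    (h : G.Colorable (max G.cliqueNum ⌈(Fintype.card V : ℚ) / G.indepNum⌉₊)) :
    G.chromaticNumber = (max G.cliqueNum ⌈(Fintype.card V : ℚ) / G.indepNum⌉₊ : ℕ∞) := by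
  refine le_antisymm (by exact_mod_cast h.chromaticNumber_le)
    (max_le cliqueNum_le_chromaticNumber (le_chromaticNumber_iff_colorable.2 fun m hm => ?_))
  exact_mod_cast hm.ceil_card_div_indepNum_le

/-- `G` is a blowup of the cycle `C_k` whose block at vertex `i` is the fibre `b ⁻¹' {i}`. -/
def IsCycleBlowup (G : SimpleGraph V) {k : ℕ} [NeZero k] (b : V → Fin k) : Prop :=
  ∀ ⦃x y⦄, x ≠ y → (G.Adj x y ↔ b x = b y ∨ b y = b x + 1 ∨ b x = b y + 1)

namespace IsCycleBlowup

variable {k : ℕ} [NeZero k] {b : V → Fin k} (hb : G.IsCycleBlowup b)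
include hb

theorem isClique_setOf_eq_or_eq_add_one (i : Fin k) :
    G.IsClique {v | b v = i ∨ b v = i + 1} := by
  rintro x (hx | hx) y (hy | hy) hxy <;> exact (hb hxy).2 (by simp [hx, hy])

theorem card_fiber_add_card_fiber_add_one_le_cliqueNum [Fintype V] (hk : 2 ≤ k) (i : Fin k) :
    #{v | b v = i} + #{v | b v = i + 1} ≤ G.cliqueNum := by
  classical
  have hdisj : Disjoint (α := Finset V) {v | b v = i} {v | b v = i + 1} :=
    disjoint_filter.2 fun v _ hv hv' => Fin.add_one_ne_self hk i (hv ▸ hv').symm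
  rw [← card_union_of_disjoint hdisj, ← filter_or]
  exact IsClique.card_le_cliqueNum (tc := by simpa using hb.isClique_setOf_eq_or_eq_add_one i)

theorem indepNum_le [Finite V] (hk : 2 ≤ k) : G.indepNum ≤ k / 2 := by
  classical
  obtain ⟨s, hs⟩ := G.exists_isNIndepSet_indepNum
  have hinj : Set.InjOn b s := fun x hx y hy hbxy => by
    by_contra hxy
    exact hs.isIndepSet hx hy hxy ((hb hxy).2 (Or.inl hbxy))
  have hgap : ∀ i ∈ s.image b, i + 1 ∉ s.image b := by
    simp only [mem_image]
    rintro _ ⟨x, hx, rfl⟩ ⟨y, hy, hbxy⟩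
    have hxy : x ≠ y := by rintro rfl; exact Fin.add_one_ne_self hk _ hbxy.symm
    exact hs.isIndepSet hx hy hxy ((hb hxy).2 (Or.inr (Or.inl hbxy)))
  have := Fin.two_mul_card_le_of_add_one_notMem hgap
  rw [card_image_of_injOn hinj, hs.card_eq] at this
  omega

theorem colorable [Fintype V] {t : ℕ}
    (hpair : ∀ i, #{v | b v = i} + #{v | b v = i + 1} ≤ t)
    (htot : Fintype.card V ≤ k / 2 * t) : G.Colorable t := by
  classical
  rcases Nat.eq_zero_or_pos t with rfl | ht
  · have : IsEmpty V := Fintype.card_eq_zero_iff.1 (by simpa using htot)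
    exact .of_isEmpty 0
  have : NeZero t := ⟨ht.ne'⟩
  have hsum : ∑ i, #{v | b v = i} = Fintype.card V :=
    (card_eq_sum_card_fiberwise fun v _ => mem_univ (b v)).symm
  obtain ⟨A, hAcard, hAdisj⟩ := exists_card_eq_and_disjoint_add_one _ hpair (hsum ▸ htot)
  obtain ⟨f, hf⟩ := exists_mapsTo_injOn_fibers b A fun i => (hAcard i).ge
  have hmem : ∀ v, f v ∈ A (b v) := fun v => (hf (b v)).1 rfl
  have hvalid : ∀ ⦃x y⦄, G.Adj x y → f x ≠ f y := by
    intro x y hxy hfxy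
    rcases (hb hxy.ne).1 hxy with h | h | h
    · exact hxy.ne ((hf (b x)).2 rfl h.symm hfxy)
    · exact Finset.disjoint_left.1 (hAdisj (b x)) (hmem x) (by rw [hfxy, ← h]; exact hmem y)
    · exact Finset.disjoint_left.1 (hAdisj (b y)) (hmem y) (by rw [← hfxy, ← h]; exact hmem x)
  simpa only [ZMod.card] using (Coloring.mk f fun h => hvalid h).colorable

theorem chromaticNumber_eq [Fintype V] (hk : 2 ≤ k) :
    G.chromaticNumber = (max G.cliqueNum ⌈(Fintype.card V : ℚ) / G.indepNum⌉₊ : ℕ∞) := by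
  refine chromaticNumber_eq_max_of_colorable (hb.colorable
    (fun i => (hb.card_fiber_add_card_fiber_add_one_le_cliqueNum hk i).trans (le_max_left _ _)) ?_)
  calc Fintype.card V ≤ ⌈(Fintype.card V : ℚ) / G.indepNum⌉₊ * G.indepNum :=
        card_le_ceil_card_div_indepNum_mul
    _ ≤ max G.cliqueNum ⌈(Fintype.card V : ℚ) / G.indepNum⌉₊ * (k / 2) :=
        Nat.mul_le_mul (le_max_right _ _) (hb.indepNum_le hk)
    _ = k / 2 * max G.cliqueNum ⌈(Fintype.card V : ℚ) / G.indepNum⌉₊ := mul_comm _ _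

end IsCycleBlowup

end SimpleGraph

theorem stmt_12 {V : Type*} [Fintype V] (G : SimpleGraph V)
    (k : ℕ) (hk : 4 ≤ k) (B : Fin k → Set V)
    (hcover : ∀ v : V, ∃ i, v ∈ B i)
    (hclique : ∀ i, G.IsClique (B i))
    (hadj : ∀ i : Fin k, ∀ x ∈ B i, ∀ y ∈ B (i + ⟨1, by omega⟩), G.Adj x y)
    (hnon : ∀ i j : Fin k, j ≠ i → j ≠ i + ⟨1, by omega⟩ → i ≠ j + ⟨1, by omega⟩ →
      ∀ x ∈ B i, ∀ y ∈ B j, ¬ G.Adj x y) :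
    G.chromaticNumber =
      (max G.cliqueNum ⌈(Fintype.card V : ℚ) / (_root_.indepNum G)⌉₊ : ℕ∞) := by
  have : NeZero k := ⟨by omega⟩
  have hone : (⟨1, by omega⟩ : Fin k) = 1 := Fin.ext (Nat.mod_eq_of_lt (by omega)).symm
  simp only [hone] at hadj hnon
  choose b hb using hcover
  have hblowup : G.IsCycleBlowup b := fun x y hxy => by
    refine ⟨fun h => ?_, ?_⟩
    · by_contra! hne
      exact hnon (b x) (b y) hne.1.symm hne.2.1 hne.2.2 x (hb x) y (hb y) h
    · rintro (h | h | h)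
      · exact hclique (b x) (hb x) (h ▸ hb y) hxy
      · exact hadj (b x) x (hb x) y (h ▸ hb y)
      · exact (hadj (b y) y (hb y) x (h ▸ hb x)).symm
  rw [_root_.indepNum, cliqueNum_compl]
  exact hblowup.chromaticNumber_eq (by omega)
end

section
/- Let G be a graph, X and Y disjoint vertex subsets with Y a clique, and suppose G is C4-free. Let s_1 be an (X,Y)-minimal simplicial vertex arising from a simplicial vertex s'_1 of G[X], and s_2 an (X,Y)-minimal simplicial vertex arising from a simplicial vertex s'_2 of G[X], with s'_1 and s'_2 non-adjacent. Then s_1 ≠ s_2 and s_1 is not adjacent to s_2. -/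
open SimpleGraph

/-- `v` is a simplicial vertex of `G[X]`: it lies in `X` and its neighborhood within `X`
is a clique. -/
def SimplicialIn {V : Type*} (G : SimpleGraph V) (X : Set V) (v : V) : Prop :=
  v ∈ X ∧ G.IsClique (X ∩ G.neighborSet v)

/-- The closed neighborhood of `s` within `X`. -/
def closedNbhdIn {V : Type*} (G : SimpleGraph V) (X : Set V) (s : V) : Set V :=
  {x ∈ X | x = s ∨ G.Adj s x}

/-- `s` is an `(X, Y)`-minimal simplicial vertex arising from a simplicial vertex `s'` of
`G[X]`: `s ∈ N_X[s']` is simplicial in `G[X]` and `N_Y(s)` is minimal (under inclusion)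
among vertices of `N_X[s']` simplicial in `G[X]`. -/
def IsMinSimplicial {V : Type*} (G : SimpleGraph V) (X Y : Set V) (s' s : V) : Prop :=
  SimplicialIn G X s' ∧ s ∈ closedNbhdIn G X s' ∧ SimplicialIn G X s ∧
    ∀ t ∈ closedNbhdIn G X s', SimplicialIn G X t →
      Y ∩ G.neighborSet t ⊆ Y ∩ G.neighborSet s →
      Y ∩ G.neighborSet t = Y ∩ G.neighborSet s

theorem stmt_13 {V : Type*} [Fintype V] (G : SimpleGraph V) (hC4 : C4Free G)
    (X Y : Set V) (hXY : Disjoint X Y) (hY : G.IsClique Y)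
    (s₁' s₁ s₂' s₂ : V)
    (h1 : IsMinSimplicial G X Y s₁' s₁) (h2 : IsMinSimplicial G X Y s₂' s₂)
    (hne : s₁' ≠ s₂') (hnadj : ¬ G.Adj s₁' s₂') :
    s₁ ≠ s₂ ∧ ¬ G.Adj s₁ s₂ := by
  obtain ⟨hs₁'X, hs₁'cl⟩ := h1.1
  obtain ⟨hs₂'X, hs₂'cl⟩ := h2.1
  obtain ⟨hs₁X, hs₁eq⟩ := h1.2.1
  obtain ⟨hs₂X, hs₂eq⟩ := h2.2.1
  have hs₁simp := h1.2.2.1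
  have hs₂simp := h2.2.2.1
  -- key claim: s₂ is neither equal nor adjacent to s₁'
  have key : ¬ (s₂ = s₁' ∨ G.Adj s₂ s₁') := by
    rintro (rfl | hadj)
    · rcases hs₂eq with h | h
      · exact hne h
      · exact hnadj h.symm
    · rcases hs₂eq with h | h
      · exact hnadj (h ▸ hadj).symm
      · have h1m : s₁' ∈ X ∩ G.neighborSet s₂ := ⟨hs₁'X, hadj⟩
        have h2m : s₂' ∈ X ∩ G.neighborSet s₂ := ⟨hs₂'X, h.symm⟩
        exact hnadj (hs₂simp.2 h1m h2m hne)
  constructor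
  · rintro rfl
    rcases hs₁eq with h | h
    · exact key (Or.inl h)
    · exact key (Or.inr h.symm)
  · intro hadj
    rcases hs₁eq with h | h
    · exact key (Or.inr (h ▸ hadj).symm)
    · by_cases hc : s₁' = s₂
      · exact key (Or.inl hc.symm)
      · have h1m : s₁' ∈ X ∩ G.neighborSet s₁ := ⟨hs₁'X, h.symm⟩
        have h2m : s₂ ∈ X ∩ G.neighborSet s₁ := ⟨hs₂X, hadj⟩
        exact key (Or.inr (hs₁simp.2 h1m h2m hc).symm)
end

section
/- Let G be a C4-free graph, X, Y ⊆ V(G) disjoint with Y a clique, and let s be an (X,Y)-minimal simplicial vertex. Then either N(s) ∩ (X ∪ Y) is a clique, or there is an induced path a-s-c-d on 4 vertices with a ∈ Y and c, d ∈ X. -/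
open SimpleGraph

theorem stmt_14 {V : Type*} [Fintype V] (G : SimpleGraph V) (hC4 : C4Free G)
    (X Y : Set V) (hXY : Disjoint X Y) (hY : G.IsClique Y)
    (s' s : V) (hs : IsMinSimplicial G X Y s' s) :
    G.IsClique ((X ∪ Y) ∩ G.neighborSet s) ∨
      ∃ a c d : V, a ∈ Y ∧ c ∈ X ∧ d ∈ X ∧
        G.Adj a s ∧ G.Adj s c ∧ G.Adj c d ∧
        ¬ G.Adj a c ∧ ¬ G.Adj a d ∧ ¬ G.Adj s d ∧
        a ≠ c ∧ a ≠ d ∧ s ≠ d := by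
  obtain ⟨hs'simp, hsmem, hssimp, hmin⟩ := hs
  by_cases hcl : G.IsClique ((X ∪ Y) ∩ G.neighborSet s)
  · exact Or.inl hcl
  right
  rw [SimpleGraph.isClique_iff, Set.Pairwise] at hcl
  push_neg at hcl
  obtain ⟨u, hu, v, hv, huv, hadj⟩ := hcl
  -- extract a ∈ Y, c ∈ X nonadjacent neighbors of s
  obtain ⟨a, c, haY, hcX, hac, has', hsc⟩ :
      ∃ a c, a ∈ Y ∧ c ∈ X ∧ ¬ G.Adj a c ∧ G.Adj s a ∧ G.Adj s c := by
    rcases hu.1 with huX | huY <;> rcases hv.1 with hvX | hvY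
    · exact absurd (hssimp.2 ⟨huX, hu.2⟩ ⟨hvX, hv.2⟩ huv) hadj
    · exact ⟨v, u, hvY, huX, fun h => hadj h.symm, hv.2, hu.2⟩
    · exact ⟨u, v, huY, hvX, hadj, hu.2, hv.2⟩
    · exact absurd (hY huY hvY huv) hadj
  have hanec : a ≠ c := by
    intro h; exact Set.disjoint_left.mp hXY (h ▸ hcX) (h ▸ haY)
  by_cases hd : ∃ d, d ∈ X ∧ G.Adj c d ∧ d ≠ s ∧ ¬ G.Adj s d
  · obtain ⟨d, hdX, hcd, hds, hsd⟩ := hd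
    have haned : a ≠ d := by
      intro h; exact Set.disjoint_left.mp hXY (h ▸ hdX) (h ▸ haY)
    have had : ¬ G.Adj a d := by
      intro h
      rcases hC4 a s c d hanec hds.symm has'.symm hsc hcd h.symm with h1 | h1
      · exact hac h1
      · exact hsd h1
    exact ⟨a, c, d, haY, hcX, hdX, has'.symm, hsc, hcd, hac, had, hsd, hanec, haned, hds.symm⟩
  · exfalso
    push_neg at hd
    -- c is simplicial in X
    have hcsimp : SimplicialIn G X c := by
      refine ⟨hcX, ?_⟩
      intro x hx y hy hxy
      rcases eq_or_ne x s with hxs | hxs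
      · have hys : y ≠ s := fun h => hxy (hxs.trans h.symm)
        have := hd y hy.1 hy.2 hys
        exact hxs ▸ this
      · have hsx : G.Adj s x := hd x hx.1 hx.2 hxs
        rcases eq_or_ne y s with hys | hys
        · exact hys ▸ hsx.symm
        · have hsy : G.Adj s y := hd y hy.1 hy.2 hys
          exact hssimp.2 ⟨hx.1, hsx⟩ ⟨hy.1, hsy⟩ hxy
    -- c ∈ closed nbhd of s' in X
    have hcmem : c ∈ closedNbhdIn G X s' := by
      refine ⟨hcX, ?_⟩
      rcases eq_or_ne c s' with h | h
      · exact Or.inl h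
      rcases hsmem.2 with hss' | hss'
      · exact Or.inr (hss' ▸ hsc)
      · exact Or.inr (hssimp.2 ⟨hs'simp.1, hss'.symm⟩ ⟨hcX, hsc⟩ (Ne.symm h))
    by_cases hsub : Y ∩ G.neighborSet c ⊆ Y ∩ G.neighborSet s
    · have heq := hmin c hcmem hcsimp hsub
      have : a ∈ Y ∩ G.neighborSet c := heq ▸ ⟨haY, has'⟩
      exact hac this.2.symm
    · obtain ⟨b, hbYc, hbs⟩ := Set.not_subset.mp hsub
      have hbY : b ∈ Y := hbYc.1
      have hcb : G.Adj c b := hbYc.2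
      have hsb : ¬ G.Adj s b := fun h => hbs ⟨hbY, h⟩
      have hba : b ≠ a := fun h => hsb (h ▸ has')
      have hsneb : s ≠ b := by
        intro h; exact Set.disjoint_left.mp hXY (h ▸ hssimp.1) (h ▸ hbY)
      rcases hC4 a s c b hanec hsneb has'.symm hsc hcb (hY hbY haY hba) with h1 | h1
      · exact hac h1
      · exact hsb h1
end

section
/- Let H = (B_1, B_2, B_3, B_4, B_5) be a nice blowup of C_5 in a graph G with no induced P_7, C_4, or C_6. Then for each i ∈ {1,...,5}, the vertices of B_i can be linearly ordered b_i^1, ..., b_i^{|B_i|} so that their neighborhoods in B_{i-1} ∪ B_{i+1} form an increasing chain: N(b_i^1) ∩ (B_{i-1} ∪ B_{i+1}) ⊆ N(b_i^2) ∩ (B_{i-1} ∪ B_{i+1}) ⊆ ... In particular B_i contains a vertex complete to B_{i-1} ∪ B_{i+1}. -/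
/-!
Two vertices `x, y` of the clique `B i` with incomparable neighbourhoods in `B (i-1) ∪ B (i+1)`
have private neighbours `u` (of `x`) and `v` (of `y`) there. If `u` and `v` lie in the same clique,
`x-u-v-y` is an induced `C₄`; otherwise `u-x-y-v` is one of the forbidden induced `P₄`s of a nice
blowup. So these neighbourhoods form a chain, and since every vertex of `B (i±1)` has a neighbour
in `B i`, the largest of them is all of `B (i-1) ∪ B (i+1)`.
-/

open SimpleGraph

lemma Set.Finite.exists_forall_le_of_total {ι α : Type*} [Preorder α] (f : ι → α) {s : Set ι}
    (hs : s.Finite) (hne : s.Nonempty) (htot : ∀ x ∈ s, ∀ y ∈ s, f x ≤ f y ∨ f y ≤ f x) :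
    ∃ x ∈ s, ∀ y ∈ s, f y ≤ f x := by
  obtain ⟨x, hx, hmax⟩ := hs.exists_maximalFor f s hne
  exact ⟨x, hx, fun y hy => (htot x hx y hy).elim (hmax hy) id⟩

namespace SimpleGraph

variable {V : Type*} {G : SimpleGraph V}

lemma nonempty_cycleGraph_four_embedding {a b c d : V}
    (hab : G.Adj a b) (hbc : G.Adj b c) (hcd : G.Adj c d) (hda : G.Adj d a)
    (hac : ¬ G.Adj a c) (hbd : ¬ G.Adj b d) (hac' : a ≠ c) (hbd' : b ≠ d) :
    Nonempty (cycleGraph 4 ↪g G) := by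
  have hinj : Function.Injective ![a, b, c, d] := by
    intro u v huv
    fin_cases u <;> fin_cases v <;>
      simp_all [hab.ne, hbc.ne, hcd.ne, hda.ne, hab.ne', hbc.ne', hcd.ne', hda.ne',
        hac'.symm, hbd'.symm]
  have hca : ¬ G.Adj c a := fun h => hac h.symm
  have hdb : ¬ G.Adj d b := fun h => hbd h.symm
  refine ⟨⟨⟨![a, b, c, d], hinj⟩, ?_⟩⟩
  intro u v
  fin_cases u <;> fin_cases v <;>
    simp [cycleGraph_adj, hab, hbc, hcd, hda, hac, hbd, hca, hdb,
      hab.symm, hbc.symm, hcd.symm, hda.symm] <;> decide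

lemma IsClique.false_of_private_neighbors (hC4 : IsEmpty (cycleGraph 4 ↪g G)) {A : Set V}
    (hA : G.IsClique A) {x y u v : V} (hx : x ∉ A) (hy : y ∉ A) (hu : u ∈ A) (hv : v ∈ A)
    (hxy : G.Adj x y) (hxu : G.Adj x u) (hyv : G.Adj y v) (hyu : ¬ G.Adj y u)
    (hxv : ¬ G.Adj x v) : False := by
  have huv : u ≠ v := by rintro rfl; exact hxv hxu
  exact hC4.false (nonempty_cycleGraph_four_embedding hxu (hA hu hv huv) hyv.symm hxy.symm hxv
    (fun h => hyu h.symm) (by rintro rfl; exact hx hv) (by rintro rfl; exact hy hu)).some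

lemma neighborSet_inter_total_of_nice_blowup (hC4 : IsEmpty (cycleGraph 4 ↪g G))
    {B : Fin 5 → Set V}
    (hdisj : ∀ i j : Fin 5, i ≠ j → Disjoint (B i) (B j))
    (hclique : ∀ i, G.IsClique (B i))
    (hanti : ∀ i : Fin 5, ∀ x ∈ B i, ∀ y ∈ B (i + 2), ¬ G.Adj x y)
    (hP4 : ∀ i : Fin 5, ∀ a ∈ B i, ∀ b ∈ B (i + 1), ∀ c ∈ B (i + 1), ∀ d ∈ B (i + 2),
      b ≠ c → G.Adj a b → G.Adj b c → G.Adj c d →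
      ¬ G.Adj a c → ¬ G.Adj b d → ¬ G.Adj a d → False)
    (i : Fin 5) {x y : V} (hx : x ∈ B i) (hy : y ∈ B i) :
    (B (i - 1) ∪ B (i + 1)) ∩ G.neighborSet x ⊆ (B (i - 1) ∪ B (i + 1)) ∩ G.neighborSet y ∨
      (B (i - 1) ∪ B (i + 1)) ∩ G.neighborSet y ⊆ (B (i - 1) ∪ B (i + 1)) ∩ G.neighborSet x := by
  have hshift : i - 1 + 2 = i + 1 := by abel
  have hP4' := hP4 (i - 1)
  have hanti' := hanti (i - 1)
  rw [sub_add_cancel, hshift] at hP4'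
  rw [hshift] at hanti'
  have hnot : ∀ {j z}, j ≠ i → z ∈ B i → z ∉ B j := fun hj hz =>
    (hdisj i _ hj.symm).notMem_of_mem_left hz
  have hprev : i - 1 ≠ i := by simp
  have hnext : i + 1 ≠ i := by simp
  by_contra h
  rw [not_or, Set.not_subset, Set.not_subset] at h
  obtain ⟨⟨u, ⟨huB, hxu⟩, huy⟩, ⟨v, ⟨hvB, hyv⟩, hvx⟩⟩ := h
  have hyu : ¬ G.Adj y u := fun h => huy ⟨huB, h⟩
  have hxv : ¬ G.Adj x v := fun h => hvx ⟨hvB, h⟩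
  have hxy : x ≠ y := by rintro rfl; exact hyu hxu
  have hxy' : G.Adj x y := hclique i hx hy hxy
  rcases huB with huB | huB <;> rcases hvB with hvB | hvB
  · exact (hclique _).false_of_private_neighbors hC4 (hnot hprev hx) (hnot hprev hy) huB hvB
      hxy' hxu hyv hyu hxv
  · exact hP4' u huB x hx y hy v hvB hxy hxu.symm hxy' hyv (fun h => hyu h.symm) hxv
      (hanti' u huB v hvB)
  · exact hP4' v hvB y hy x hx u huB hxy.symm hyv.symm hxy'.symm hxu (fun h => hxv h.symm) hyu
      (hanti' v hvB u huB)
  · exact (hclique _).false_of_private_neighbors hC4 (hnot hnext hx) (hnot hnext hy) huB hvB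
      hxy' hxu hyv hyu hxv

end SimpleGraph

theorem stmt_16_general {V : Type*} [Fintype V] (G : SimpleGraph V)
    (hC4 : IsEmpty (cycleGraph 4 ↪g G))
    -- `(B 0, …, B 4)` is a nice blowup of `C₅` (indices mod 5):
    (B : Fin 5 → Set V)
    (hdisj : ∀ i j : Fin 5, i ≠ j → Disjoint (B i) (B j))
    (hclique : ∀ i, G.IsClique (B i))
    (hne : ∀ i, (B i).Nonempty)
    (hnbr : ∀ i : Fin 5, ∀ v ∈ B i,
      (∃ x ∈ B (i - 1), G.Adj v x) ∧ ∃ x ∈ B (i + 1), G.Adj v x)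
    (hanti : ∀ i : Fin 5, ∀ x ∈ B i, ∀ y ∈ B (i + 2), ¬ G.Adj x y)
    (hP4 : ∀ i : Fin 5, ∀ a ∈ B i, ∀ b ∈ B (i + 1), ∀ c ∈ B (i + 1), ∀ d ∈ B (i + 2),
      b ≠ c → G.Adj a b → G.Adj b c → G.Adj c d →
      ¬ G.Adj a c → ¬ G.Adj b d → ¬ G.Adj a d → False) :
    ∀ i : Fin 5,
      -- the neighborhoods in `B (i-1) ∪ B (i+1)` of vertices of `B i` form a chain
      (∀ x ∈ B i, ∀ y ∈ B i,
        (B (i - 1) ∪ B (i + 1)) ∩ G.neighborSet x ⊆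
          (B (i - 1) ∪ B (i + 1)) ∩ G.neighborSet y ∨
        (B (i - 1) ∪ B (i + 1)) ∩ G.neighborSet y ⊆
          (B (i - 1) ∪ B (i + 1)) ∩ G.neighborSet x) ∧
      -- in particular `B i` contains a vertex complete to `B (i-1) ∪ B (i+1)`
      ∃ x ∈ B i, ∀ y ∈ B (i - 1) ∪ B (i + 1), G.Adj x y := by
  intro i
  have htot : ∀ x ∈ B i, ∀ y ∈ B i, _ := fun x hx y hy =>
    neighborSet_inter_total_of_nice_blowup hC4 hdisj hclique hanti hP4 i hx hy
  obtain ⟨x, hx, hmax⟩ := (B i).toFinite.exists_forall_le_of_total _ (hne i) htot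
  refine ⟨htot, x, hx, ?_⟩
  rintro u (hu | hu)
  · obtain ⟨y, hy, hyu⟩ := (hnbr (i - 1) u hu).2
    rw [sub_add_cancel] at hy
    exact (hmax y hy ⟨Or.inl hu, hyu.symm⟩).2
  · obtain ⟨y, hy, hyu⟩ := (hnbr (i + 1) u hu).1
    rw [add_sub_cancel_right] at hy
    exact (hmax y hy ⟨Or.inr hu, hyu.symm⟩).2

theorem stmt_16 {V : Type*} [Fintype V] (G : SimpleGraph V)
    (hP7 : IsEmpty (pathGraph 7 ↪g G))
    (hC4 : IsEmpty (cycleGraph 4 ↪g G))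
    (hC6 : IsEmpty (cycleGraph 6 ↪g G))
    -- `(B 0, …, B 4)` is a nice blowup of `C₅` (indices mod 5):
    (B : Fin 5 → Set V)
    (hdisj : ∀ i j : Fin 5, i ≠ j → Disjoint (B i) (B j))
    (hclique : ∀ i, G.IsClique (B i))
    (hne : ∀ i, (B i).Nonempty)
    (hnbr : ∀ i : Fin 5, ∀ v ∈ B i,
      (∃ x ∈ B (i - 1), G.Adj v x) ∧ ∃ x ∈ B (i + 1), G.Adj v x)
    (hanti : ∀ i : Fin 5, ∀ x ∈ B i, ∀ y ∈ B (i + 2), ¬ G.Adj x y)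
    (hP4 : ∀ i : Fin 5, ∀ a ∈ B i, ∀ b ∈ B (i + 1), ∀ c ∈ B (i + 1), ∀ d ∈ B (i + 2),
      b ≠ c → G.Adj a b → G.Adj b c → G.Adj c d →
      ¬ G.Adj a c → ¬ G.Adj b d → ¬ G.Adj a d → False) :
    ∀ i : Fin 5,
      -- the neighborhoods in `B (i-1) ∪ B (i+1)` of vertices of `B i` form a chain
      (∀ x ∈ B i, ∀ y ∈ B i,
        (B (i - 1) ∪ B (i + 1)) ∩ G.neighborSet x ⊆
          (B (i - 1) ∪ B (i + 1)) ∩ G.neighborSet y ∨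
        (B (i - 1) ∪ B (i + 1)) ∩ G.neighborSet y ⊆
          (B (i - 1) ∪ B (i + 1)) ∩ G.neighborSet x) ∧
      -- in particular `B i` contains a vertex complete to `B (i-1) ∪ B (i+1)`
      ∃ x ∈ B i, ∀ y ∈ B (i - 1) ∪ B (i + 1), G.Adj x y :=
  stmt_16_general G hC4 B hdisj hclique hne hnbr hanti hP4
end

section
/- Let G be a C4-free graph containing a nice blowup (B_1,...,B_5) of C_5 in which each B_i has a vertex q_i complete to B_{i-1} ∪ B_{i+1}. Let A_5 be the set of vertices outside the blowup having a neighbor in every B_i. Then every vertex of A_5 is complete to B_1 ∪ ... ∪ B_5, and A_5 is a clique. -/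
open SimpleGraph

theorem stmt_18 {V : Type*} [Fintype V] (G : SimpleGraph V) (hC4 : C4Free G)
    -- `(B 0, …, B 4)` is a nice blowup of `C₅` (indices mod 5):
    (B : Fin 5 → Set V)
    (hdisj : ∀ i j : Fin 5, i ≠ j → Disjoint (B i) (B j))
    (hclique : ∀ i, G.IsClique (B i))
    (hnbr : ∀ i : Fin 5, ∀ v ∈ B i,
      (∃ x ∈ B (i - 1), G.Adj v x) ∧ ∃ x ∈ B (i + 1), G.Adj v x)
    (hanti : ∀ i : Fin 5, ∀ x ∈ B i, ∀ y ∈ B (i + 2), ¬ G.Adj x y)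
    (hP4 : ∀ i : Fin 5, ∀ a ∈ B i, ∀ b ∈ B (i + 1), ∀ c ∈ B (i + 1), ∀ d ∈ B (i + 2),
      b ≠ c → G.Adj a b → G.Adj b c → G.Adj c d →
      ¬ G.Adj a c → ¬ G.Adj b d → ¬ G.Adj a d → False)
    -- each `B i` contains a vertex `q i` complete to `B (i-1) ∪ B (i+1)`:
    (q : Fin 5 → V) (hq : ∀ i, q i ∈ B i)
    (hqc : ∀ i : Fin 5, ∀ y ∈ B (i - 1) ∪ B (i + 1), G.Adj (q i) y) :
    -- every vertex of `A₅` is complete to `B 0 ∪ … ∪ B 4`, and `A₅` is a clique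
    (∀ v : V, (∀ i, v ∉ B i) → (∀ i, ∃ x ∈ B i, G.Adj v x) →
      ∀ i : Fin 5, ∀ x ∈ B i, G.Adj v x) ∧
    G.IsClique {v : V | (∀ i, v ∉ B i) ∧ ∀ i, ∃ x ∈ B i, G.Adj v x} := by

  have e1 : ∀ j : Fin 5, (j - 1) + 1 = j := by decide
  have e2 : ∀ j : Fin 5, (j - 1) + 2 = j + 1 := by decide
  have e3 : ∀ j : Fin 5, (j + 1) - 1 = j := by decide
  have e4 : ∀ j : Fin 5, (j + 1) + 2 = j + 3 := by decide
  have n1 : ∀ j : Fin 5, j - 1 ≠ j + 1 := by decide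
  have hmem : ∀ i j : Fin 5, i ≠ j → ∀ x ∈ B i, ∀ y ∈ B j, x ≠ y := by
    intro i j hij x hx y hy hxy
    exact (hdisj i j hij).ne_of_mem hx hy hxy
  have key : ∀ v : V, (∀ i, v ∉ B i) → (∀ i, ∃ x ∈ B i, G.Adj v x) →
      ∀ i : Fin 5, ∀ x ∈ B i, G.Adj v x := by
    intro v hout hnb
    have hvq : ∀ j : Fin 5, G.Adj v (q j) := by
      intro j
      obtain ⟨x, hx, hvx⟩ := hnb (j - 1)
      obtain ⟨y, hy, hvy⟩ := hnb (j + 1)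
      have h1 : G.Adj x (q j) := (hqc j x (Or.inl hx)).symm
      have h2 : G.Adj (q j) y := hqc j y (Or.inr hy)
      have hne1 : v ≠ q j := fun h => hout j (h ▸ hq j)
      have hne2 : x ≠ y := hmem (j - 1) (j + 1) (n1 j) x hx y hy
      rcases hC4 v x (q j) y hne1 hne2 hvx h1 h2 hvy.symm with h | h
      · exact h
      · exact absurd h (hanti (j - 1) x hx y (by rw [e2 j]; exact hy))
    intro i x hx
    have hne1 : v ≠ x := fun h => hout i (h ▸ hx)
    have hne2 : q (i - 1) ≠ q (i + 1) :=
      hmem (i - 1) (i + 1) (n1 i) _ (hq _) _ (hq _)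
    have h1 : G.Adj (q (i - 1)) x := hqc (i - 1) x (Or.inr (by rw [e1 i]; exact hx))
    have h2 : G.Adj x (q (i + 1)) := (hqc (i + 1) x (Or.inl (by rw [e3 i]; exact hx))).symm
    rcases hC4 v (q (i - 1)) x (q (i + 1)) hne1 hne2 (hvq _) h1 h2 (hvq _).symm with h | h
    · exact h
    · exact absurd h (hanti (i - 1) _ (hq _) _ (by rw [e2 i]; exact hq (i + 1)))
  refine ⟨key, ?_⟩
  intro u hu v hv huv
  have hu' := key u hu.1 hu.2
  have hv' := key v hv.1 hv.2
  have h1 : G.Adj u (q 1) := hu' 1 _ (hq 1)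
  have h2 : G.Adj (q 1) v := (hv' 1 _ (hq 1)).symm
  have h3 : G.Adj v (q 3) := hv' 3 _ (hq 3)
  have h4 : G.Adj (q 3) u := (hu' 3 _ (hq 3)).symm
  have hne2 : q 1 ≠ q 3 := hmem 1 3 (by decide) _ (hq 1) _ (hq 3)
  rcases hC4 u (q 1) v (q 3) huv hne2 h1 h2 h3 h4 with h | h
  · exact h
  · exact absurd h (hanti 1 _ (hq 1) _ (hq 3))
end

section
/- Let G be a graph, X_1, X_2, X_3, X* four pairwise disjoint cliques with |X_1| > ⌈ω(G)/4⌉, |X_2| ≤ (3/4)ω(G), |X_3| = ⌈ω(G)/4⌉, such that X_1 ∪ X* is anticomplete to X_3, every two vertices in X_1 ∪ X* have comparable neighborhoods in X_2, and for every v ∈ X* and u ∈ X_1 we have N_{X_2}(v) ⊆ N_{X_2}(u). Let P ⊆ X_1 be the set of p vertices of X_1 with largest neighborhoods in X_2, where 1 ≤ p ≤ ⌈ω(G)/4⌉, and let F be an induced subgraph of G with V(F) ∩ P = ∅. If v ∈ V(F) ∩ X_2 satisfies N_F(v) ⊆ X_1 ∪ X_2 ∪ X_3 ∪ X* and N(v)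 ∩ (X_1 ∪ X_2 ∪ X*) is a clique of G, then the degree of v in F is less than ⌈(5/4)ω(G)⌉ − p. -/
/-!
Let `A` be the set of neighbours of `v` in `F ∩ (X₁ ∪ X₂ ∪ X*)`; the remaining neighbours of `v`
in `F` lie in `X₃`, so `deg_F v ≤ |A| + ⌈ω/4⌉`, while `⌈5ω/4⌉ = ω + ⌈ω/4⌉`.
If `v` has a neighbour `w ∈ F` in `X₁ ∪ X*`, then `w ∉ P`, so the neighbourhood of `w` in `X₂`, which
contains `v`, is contained in that of every vertex of `P`; hence `v` is complete to `P`, and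
`{v} ∪ A ∪ P` is a clique, giving `|A| + p < ω`. Otherwise `A ⊊ X₂`, and `|X₂| + ⌈ω/4⌉ ≤ ω` together
with `p ≤ ⌈ω/4⌉` gives the bound.
-/

open SimpleGraph Finset

lemma Nat.ceil_five_quarters_mul (n : ℕ) : ⌈(5 / 4 : ℚ) * n⌉₊ = n + ⌈(n : ℚ) / 4⌉₊ := by
  rw [show (5 / 4 : ℚ) * n = (n : ℚ) / 4 + n by ring, Nat.ceil_add_natCast (by positivity),
    Nat.add_comm]

lemma Nat.add_ceil_quarter_le {k n : ℕ} (h : (k : ℚ) ≤ 3 / 4 * n) : k + ⌈(n : ℚ) / 4⌉₊ ≤ n := by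
  have hkn : (k : ℚ) ≤ n := by linarith [(n.cast_nonneg : (0 : ℚ) ≤ n)]
  replace hkn : k ≤ n := by exact_mod_cast hkn
  suffices ⌈(n : ℚ) / 4⌉₊ ≤ n - k by omega
  rw [Nat.ceil_le, Nat.cast_sub hkn]
  linarith

namespace SimpleGraph

variable {V : Type*} {G : SimpleGraph V}

lemma IsClique.card_lt_cliqueNum_of_forall_adj [Finite V] {t : Finset V} {v : V}
    (ht : G.IsClique (t : Set V)) (hv : ∀ w ∈ t, G.Adj v w) : #t < G.cliqueNum := by
  have hvt : v ∉ t := fun h => G.loopless.irrefl v (hv v h)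
  have hclique : G.IsClique ((t.cons v hvt : Finset V) : Set V) := by
    rw [coe_cons]
    exact ht.insert fun w hw _ => hv w hw
  simpa [card_cons] using hclique.card_le_cliqueNum

lemma Adj.of_inter_neighborSet_subset {X : Set V} {u w x : V} (hu : u ∈ X) (huw : G.Adj u w)
    (h : X ∩ G.neighborSet w ⊆ X ∩ G.neighborSet x) : G.Adj u x :=
  (h ⟨hu, huw.symm⟩).2.symm

lemma card_add_card_lt_cliqueNum [Finite V] [DecidableEq V] {v : V} {S A B : Finset V}
    (hS : G.IsClique (G.neighborSet v ∩ (S : Set V))) (hAS : A ⊆ S) (hBS : B ⊆ S)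
    (hvA : ∀ a ∈ A, G.Adj v a) (hvB : ∀ b ∈ B, G.Adj v b) (hAB : Disjoint A B) :
    #A + #B < G.cliqueNum := by
  have hvAB : ∀ w ∈ A ∪ B, G.Adj v w := fun w hw => (mem_union.mp hw).elim (hvA w) (hvB w)
  have hclique : G.IsClique ((A ∪ B : Finset V) : Set V) :=
    hS.subset fun w (hw : w ∈ A ∪ B) => Set.mem_inter (hvAB w hw) (union_subset hAS hBS hw)
  simpa [card_union_of_disjoint hAB] using hclique.card_lt_cliqueNum_of_forall_adj hvAB

lemma ncard_adj_le_card_filter_add_card [DecidableEq V] [DecidableRel G.Adj] {F : Set V}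
    [DecidablePred (· ∈ F)] {v : V} {Y Z : Finset V} (hN : ∀ w ∈ F, G.Adj v w → w ∈ Y ∪ Z) :
    {w | w ∈ F ∧ G.Adj v w}.ncard ≤ #{w ∈ Y | w ∈ F ∧ G.Adj v w} + #Z := by
  have hsub : {w | w ∈ F ∧ G.Adj v w} ⊆ (({w ∈ Y | w ∈ F ∧ G.Adj v w} ∪ Z : Finset V) : Set V) := by
    rintro w ⟨hwF, hvw⟩
    rcases mem_union.mp (hN w hwF hvw) with hY | hZ
    · simp [hY, hwF, hvw]
    · simp [hZ]
  calc {w | w ∈ F ∧ G.Adj v w}.ncard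
      ≤ #({w ∈ Y | w ∈ F ∧ G.Adj v w} ∪ Z) := by
        simpa only [Set.ncard_coe_finset] using Set.ncard_le_ncard hsub (Set.toFinite _)
    _ ≤ _ := card_union_le _ _

end SimpleGraph

open SimpleGraph

theorem stmt_19_general {V : Type*} [Fintype V] [DecidableEq V] (G : SimpleGraph V)
    (X₁ X₂ X₃ Xstar : Finset V) (p : ℕ)
    -- size conditions
    (hX2 : (X₂.card : ℚ) ≤ 3 / 4 * G.cliqueNum)
    (hX3 : X₃.card = ⌈(G.cliqueNum : ℚ) / 4⌉₊)
    -- neighborhoods in `X₂` of vertices of `X*` are below those of vertices of `X₁`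
    (hstar : ∀ v ∈ Xstar, ∀ u ∈ X₁,
      (X₂ : Set V) ∩ G.neighborSet v ⊆ (X₂ : Set V) ∩ G.neighborSet u)
    -- `P` consists of `p` vertices of `X₁` with largest neighborhoods in `X₂`
    (P : Finset V) (hP : P ⊆ X₁) (hPcard : P.card = p)
    (hp2 : p ≤ ⌈(G.cliqueNum : ℚ) / 4⌉₊)
    (hPmax : ∀ x ∈ P, ∀ y ∈ X₁ \ P,
      (X₂ : Set V) ∩ G.neighborSet y ⊆ (X₂ : Set V) ∩ G.neighborSet x)
    -- `F` is an induced subgraph of `G` avoiding `P`, identified with its vertex set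
    (F : Set V) (hFP : Disjoint F (P : Set V))
    -- `v ∈ V(F) ∩ X₂` with `N_F(v) ⊆ X₁ ∪ X₂ ∪ X₃ ∪ X*`
    (v : V) (hvX2 : v ∈ X₂)
    (hNF : ∀ w ∈ F, G.Adj v w → w ∈ X₁ ∪ X₂ ∪ X₃ ∪ Xstar)
    -- `N(v) ∩ (X₁ ∪ X₂ ∪ X*)` is a clique of `G`
    (hclN : G.IsClique (G.neighborSet v ∩ ((X₁ ∪ X₂ ∪ Xstar : Finset V) : Set V))) :
    -- the degree of `v` in `F` is less than `⌈(5/4) ω(G)⌉ - p`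
    {w : V | w ∈ F ∧ G.Adj v w}.ncard + p < ⌈(5 / 4 : ℚ) * G.cliqueNum⌉₊ := by
  classical
  rw [Nat.ceil_five_quarters_mul]
  set A := {w ∈ X₁ ∪ X₂ ∪ Xstar | w ∈ F ∧ G.Adj v w}
  have hdeg : {w | w ∈ F ∧ G.Adj v w}.ncard ≤ #A + #X₃ :=
    ncard_adj_le_card_filter_add_card fun w hwF hvw => by
      have := hNF w hwF hvw
      simp only [mem_union] at this ⊢
      tauto
  have hAF : ∀ a ∈ A, a ∈ F ∧ G.Adj v a := fun a ha => (mem_filter.mp ha).2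
  by_cases hout : ∃ w ∈ X₁ ∪ Xstar, w ∈ F ∧ G.Adj v w
  · obtain ⟨w, hw, hwF, hvw⟩ := hout
    have hwP : w ∉ P := Set.disjoint_left.mp hFP hwF
    have hvP : ∀ x ∈ P, G.Adj v x := fun x hx =>
      hvw.of_inter_neighborSet_subset hvX2 <| (mem_union.mp hw).elim
        (fun hw₁ => hPmax x hx w (mem_sdiff.mpr ⟨hw₁, hwP⟩)) (fun hw' => hstar w hw' x (hP hx))
    have hAP : Disjoint A P :=
      disjoint_left.mpr fun a ha => Set.disjoint_left.mp hFP (hAF a ha).1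
    have hAPω : #A + #P < G.cliqueNum := card_add_card_lt_cliqueNum hclN (filter_subset _ _)
      (hP.trans (subset_union_left.trans subset_union_left)) (fun a ha => (hAF a ha).2) hvP hAP
    omega
  · push Not at hout
    have hAX₂ : A ⊂ X₂ := by
      refine (ssubset_iff_of_subset fun a ha => ?_).mpr
        ⟨v, hvX2, fun hv => G.loopless.irrefl v (hAF v hv).2⟩
      obtain ⟨ha, haF, hva⟩ := mem_filter.mp ha
      have := hout a
      simp only [mem_union] at ha this
      tauto
    have := card_lt_card hAX₂
    have := Nat.add_ceil_quarter_le hX2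
    omega

theorem stmt_19 {V : Type*} [Fintype V] [DecidableEq V] (G : SimpleGraph V)
    (X₁ X₂ X₃ Xstar : Finset V) (p : ℕ)
    -- four pairwise disjoint cliques
    (hd12 : Disjoint X₁ X₂) (hd13 : Disjoint X₁ X₃) (hd1s : Disjoint X₁ Xstar)
    (hd23 : Disjoint X₂ X₃) (hd2s : Disjoint X₂ Xstar) (hd3s : Disjoint X₃ Xstar)
    (hcl1 : G.IsClique (X₁ : Set V)) (hcl2 : G.IsClique (X₂ : Set V))
    (hcl3 : G.IsClique (X₃ : Set V)) (hcls : G.IsClique (Xstar : Set V))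
    -- size conditions
    (hX1 : ⌈(G.cliqueNum : ℚ) / 4⌉₊ < X₁.card)
    (hX2 : (X₂.card : ℚ) ≤ 3 / 4 * G.cliqueNum)
    (hX3 : X₃.card = ⌈(G.cliqueNum : ℚ) / 4⌉₊)
    -- `X₁ ∪ X*` is anticomplete to `X₃`
    (hanti : ∀ x ∈ X₁ ∪ Xstar, ∀ y ∈ X₃, ¬ G.Adj x y)
    -- any two vertices of `X₁ ∪ X*` have comparable neighborhoods in `X₂`
    (hcomp : ∀ x ∈ X₁ ∪ Xstar, ∀ y ∈ X₁ ∪ Xstar,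
      (X₂ : Set V) ∩ G.neighborSet x ⊆ (X₂ : Set V) ∩ G.neighborSet y ∨
      (X₂ : Set V) ∩ G.neighborSet y ⊆ (X₂ : Set V) ∩ G.neighborSet x)
    -- neighborhoods in `X₂` of vertices of `X*` are below those of vertices of `X₁`
    (hstar : ∀ v ∈ Xstar, ∀ u ∈ X₁,
      (X₂ : Set V) ∩ G.neighborSet v ⊆ (X₂ : Set V) ∩ G.neighborSet u)
    -- `P` consists of `p` vertices of `X₁` with largest neighborhoods in `X₂`
    (P : Finset V) (hP : P ⊆ X₁) (hPcard : P.card = p)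
    (hp1 : 1 ≤ p) (hp2 : p ≤ ⌈(G.cliqueNum : ℚ) / 4⌉₊)
    (hPmax : ∀ x ∈ P, ∀ y ∈ X₁ \ P,
      (X₂ : Set V) ∩ G.neighborSet y ⊆ (X₂ : Set V) ∩ G.neighborSet x)
    -- `F` is an induced subgraph of `G` avoiding `P`, identified with its vertex set
    (F : Set V) (hFP : Disjoint F (P : Set V))
    -- `v ∈ V(F) ∩ X₂` with `N_F(v) ⊆ X₁ ∪ X₂ ∪ X₃ ∪ X*`
    (v : V) (hvF : v ∈ F) (hvX2 : v ∈ X₂)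
    (hNF : ∀ w ∈ F, G.Adj v w → w ∈ X₁ ∪ X₂ ∪ X₃ ∪ Xstar)
    -- `N(v) ∩ (X₁ ∪ X₂ ∪ X*)` is a clique of `G`
    (hclN : G.IsClique (G.neighborSet v ∩ ((X₁ ∪ X₂ ∪ Xstar : Finset V) : Set V))) :
    -- the degree of `v` in `F` is less than `⌈(5/4) ω(G)⌉ - p`
    {w : V | w ∈ F ∧ G.Adj v w}.ncard + p < ⌈(5 / 4 : ℚ) * G.cliqueNum⌉₊ :=
  stmt_19_general G X₁ X₂ X₃ Xstar p hX2 hX3 hstar P hP hPcard hp2 hPmax F hFP v hvX2 hNF hclN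
end
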